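/- arXiv:1204.5714 — 12 statements merged into one kernel-verified Lean document; each statement's English description precedes it below -/
import Mathlib

section
/- A relation R ⊆ {0,1}^V is a delta matroid if and only if its indicator function is terraced. That is, R satisfies the delta matroid exchange property (for all x,y ∈ R and all i in the symmetric difference of x and y, there exists j in the symmetric difference with x flipped at {i,j} in R) if and only if for every partial configuration p of V and all i,j in the domain of p, whenever the pinning of R by p is empty, the pinnings of R by p flipped at i and by p flipped at j are linearly dependent as functions (equivalently, as relations, one is empty or they are equal). -/
variable {V : Type} [Fintype V] [DecidableEq V]

/-- Flip a configuration on a set of coordinates. -/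
def flipS (x : V → Bool) (S : Finset V) : V → Bool := fun v => if v ∈ S then !x v else x v

/-- `patch p x D` is the configuration equal to `p` on `D` and to `x` off `D`. -/
def patch (p x : V → Bool) (D : Finset V) : V → Bool := fun v => if v ∈ D then p v else x v

/-- Flip the value of a (partial) configuration at one coordinate. -/
def flipOne (p : V → Bool) (i : V) : V → Bool := Function.update p i (!p i)

/-- The pinning of a relation by the partial configuration `p` with domain `D`,
represented as the set of full configurations whose restriction off `D`,
combined with `p` on `D`, lies in `R` (values on `D` are irrelevant). -/
def Pin (R : Set (V → Bool)) (p : V → Bool) (D : Finset V) : Set (V → Bool) :=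
  {x | patch p x D ∈ R}

/-- The delta matroid exchange property. -/
def DeltaMatroid (R : Set (V → Bool)) : Prop :=
  ∀ x ∈ R, ∀ y ∈ R, ∀ i, x i ≠ y i → ∃ j, x j ≠ y j ∧ flipS x {i, j} ∈ R

lemma bool_flip_eq {a b : Bool} (h : a ≠ b) : (!a) = b := by
  cases a <;> cases b <;> simp_all

lemma bool_flip_eq' {a b : Bool} (h : a ≠ b) : a = !b := by
  cases a <;> cases b <;> simp_all

lemma flipOne_flipOne (p : V → Bool) (i : V) : flipOne (flipOne p i) i = p := by
  funext v
  by_cases h : v = i <;> simp [flipOne, Function.update, h]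

lemma patch_self (p : V → Bool) (D : Finset V) : patch p p D = p := by
  funext v; simp [patch]

lemma pin_trans {R : Set (V → Bool)} (hR : DeltaMatroid R) {D : Finset V} {p : V → Bool}
    {i j : V} (hi : i ∈ D) (hj : j ∈ D) (hij : i ≠ j)
    (hemp : Pin R p D = ∅) {x y : V → Bool}
    (hy : y ∈ Pin R (flipOne p j) D) (hx : x ∈ Pin R (flipOne p i) D) :
    x ∈ Pin R (flipOne p j) D := by
  set a := patch (flipOne p i) x D with ha_def
  set b := patch (flipOne p j) y D with hb_def
  have ha : a ∈ R := hx
  have hb : b ∈ R := hy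
  have hdi : a i ≠ b i := by
    simp [ha_def, hb_def, patch, flipOne, Function.update, hi, hij]
  obtain ⟨k, hk, hfl⟩ := hR a ha b hb i hdi
  by_cases hki : k = i
  · exfalso
    rw [hki] at hfl
    have heq : flipS a {i, i} = patch p x D := by
      funext v
      by_cases hvi : v = i
      · subst hvi; simp [flipS, patch, flipOne, Function.update, hi, ha_def]
      · by_cases hvD : v ∈ D <;>
          simp [flipS, patch, flipOne, Function.update, hvi, hvD, ha_def]
    rw [heq] at hfl
    have : x ∈ Pin R p D := hfl
    simp [hemp] at this
  · by_cases hkD : k ∈ D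
    · have hkj : k = j := by
        by_contra hkj
        apply hk
        simp [ha_def, hb_def, patch, flipOne, Function.update, hkD, hki, hkj]
      rw [hkj] at hfl
      have heq : flipS a {i, j} = patch (flipOne p j) x D := by
        funext v
        by_cases hvi : v = i
        · subst hvi
          simp [flipS, patch, flipOne, Function.update, hi, hij, ha_def, Ne.symm hij]
        · by_cases hvk : v = j
          · subst hvk
            simp [flipS, patch, flipOne, Function.update, hj, ha_def, Ne.symm hij, hvi]
          · by_cases hvD : v ∈ D <;>
              simp [flipS, patch, flipOne, Function.update, hvi, hvk, hvD, ha_def]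
      rw [heq] at hfl
      exact hfl
    · exfalso
      have heq : flipS a {i, k} = patch p (Function.update x k (!x k)) D := by
        funext v
        by_cases hvi : v = i
        · subst hvi
          simp [flipS, patch, flipOne, Function.update, hi, ha_def, Ne.symm hki]
        · by_cases hvk : v = k
          · subst hvk
            simp [flipS, patch, flipOne, Function.update, hkD, hvi, ha_def]
          · by_cases hvD : v ∈ D <;>
              simp [flipS, patch, flipOne, Function.update, hvi, hvk, hvD, ha_def]
      rw [heq] at hfl
      have : Function.update x k (!x k) ∈ Pin R p D := hfl
      simp [hemp] at this

lemma exchange_of_terraced {R : Set (V → Bool)}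
    (T : ∀ (D : Finset V) (p : V → Bool) (i j : V), i ∈ D → j ∈ D →
        Pin R p D = ∅ →
        (Pin R (flipOne p i) D = ∅ ∨ Pin R (flipOne p j) D = ∅ ∨
          Pin R (flipOne p i) D = Pin R (flipOne p j) D)) :
    ∀ n : ℕ, ∀ x ∈ R, ∀ y ∈ R, ∀ i, x i ≠ y i →
      (Finset.univ.filter fun v => x v ≠ y v).card ≤ n →
      ∃ j, x j ≠ y j ∧ flipS x {i, j} ∈ R := by
  intro n
  induction n with
  | zero =>
    intro x hx y hy i hxi hcard
    exfalso
    have hmem : i ∈ Finset.univ.filter fun v => x v ≠ y v := by simp [hxi]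
    have := Finset.card_pos.mpr ⟨i, hmem⟩
    omega
  | succ n ih =>
    intro x hx y hy i hxi hcard
    by_contra hno
    push_neg at hno
    set Δ := Finset.univ.filter fun v => x v ≠ y v with hΔ
    have hiΔ : i ∈ Δ := by simp [hΔ, hxi]
    have hk_ex : ∃ k, k ∈ Δ ∧ k ≠ i := by
      by_contra hc
      push_neg at hc
      have hy' : flipS x {i, i} = y := by
        funext v
        by_cases hv : v = i
        · subst hv; simp [flipS]; exact bool_flip_eq' hxi
        · have hvΔ : v ∉ Δ := fun h => hv (hc v h)
          simp [hΔ] at hvΔ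
          simp [flipS, hv, hvΔ]
      exact hno i hxi (hy' ▸ hy)
    obtain ⟨k, hkΔ, hki⟩ := hk_ex
    have hxk : x k ≠ y k := by simpa [hΔ] using hkΔ
    set D : Finset V := (Δ \ {i, k})ᶜ with hD
    have hiD : i ∈ D := by simp [hD]
    have hkD : k ∈ D := by simp [hD]
    set p := flipOne x i with hp
    have hemp : Pin R p D = ∅ := by
      rw [Set.eq_empty_iff_forall_notMem]
      intro z hz
      set w := patch p z D with hw
      have hwR : w ∈ R := hz
      have hwi : w i = !x i := by
        simp [hw, patch, hiD, hp, flipOne, Function.update]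
      have hxwi : x i ≠ w i := by simp [hwi]
      have hsub : (Finset.univ.filter fun v => x v ≠ w v) ⊆ Δ.erase k := by
        intro v hv
        simp only [Finset.mem_filter, Finset.mem_univ, true_and] at hv
        by_cases hvD : v ∈ D
        · by_cases hvi : v = i
          · subst hvi; exact Finset.mem_erase.mpr ⟨Ne.symm hki, hiΔ⟩
          · exfalso; apply hv
            simp [hw, patch, hvD, hp, flipOne, Function.update, hvi]
        · have hv2 : v ∈ Δ \ ({i, k} : Finset V) := by
            simpa [hD] using hvD
          rw [Finset.mem_sdiff] at hv2
          refine Finset.mem_erase.mpr ⟨?_, hv2.1⟩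
          intro hvk
          exact hv2.2 (by simp [hvk])
      have hcard2 : (Finset.univ.filter fun v => x v ≠ w v).card ≤ n := by
        have h1 := Finset.card_le_card hsub
        have h2 : (Δ.erase k).card = Δ.card - 1 := Finset.card_erase_of_mem hkΔ
        have h3 : 0 < Δ.card := Finset.card_pos.mpr ⟨i, hiΔ⟩
        omega
      obtain ⟨j, hj1, hj2⟩ := ih x hx w hwR i hxwi hcard2
      have hjΔ : j ∈ Δ.erase k := hsub (by simp [hj1])
      have : x j ≠ y j := by
        have := (Finset.mem_erase.mp hjΔ).2
        simpa [hΔ] using this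
      exact hno j this hj2
    rcases T D p i k hiD hkD hemp with h1 | h2 | h3
    · have hxPin : x ∈ Pin R (flipOne p i) D := by
        rw [hp, flipOne_flipOne]
        show patch x x D ∈ R
        rw [patch_self]; exact hx
      rw [h1] at hxPin
      exact hxPin
    · have hyPin : y ∈ Pin R (flipOne p k) D := by
        show patch (flipOne p k) y D ∈ R
        have heq : patch (flipOne p k) y D = y := by
          funext v
          by_cases hvD : v ∈ D
          · by_cases hvk : v = k
            · subst hvk
              simp [patch, hvD, hp, flipOne, Function.update, hki]
              exact bool_flip_eq' hxk
            · by_cases hvi : v = i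
              · subst hvi
                simp [patch, hvD, hp, flipOne, Function.update, Ne.symm hki]
                exact bool_flip_eq' hxi
              · have hvΔ : v ∉ Δ := by
                  intro hvΔ
                  have : v ∈ Δ \ ({i, k} : Finset V) :=
                    Finset.mem_sdiff.mpr ⟨hvΔ, by simp [hvi, hvk]⟩
                  rw [hD] at hvD
                  exact (Finset.mem_compl.mp hvD) this
                have hxy : x v = y v := by
                  by_contra hne
                  exact hvΔ (by simp [hΔ, hne])
                simp [patch, hvD, hp, flipOne, Function.update, hvi, hvk, hxy]
          · simp [patch, hvD]
        rw [heq]; exact hy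
      rw [h2] at hyPin
      exact hyPin
    · have hxPin : x ∈ Pin R (flipOne p i) D := by
        rw [hp, flipOne_flipOne]
        show patch x x D ∈ R
        rw [patch_self]; exact hx
      rw [h3] at hxPin
      have hfl : patch (flipOne p k) x D ∈ R := hxPin
      have heq : patch (flipOne p k) x D = flipS x {i, k} := by
        funext v
        by_cases hvi : v = i
        · subst hvi
          simp [patch, flipS, hiD, hp, flipOne, Function.update, Ne.symm hki]
        · by_cases hvk : v = k
          · subst hvk
            simp [patch, flipS, hkD, hp, flipOne, Function.update, hki]
          · by_cases hvD : v ∈ D <;>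
              simp [patch, flipS, hvD, hp, flipOne, Function.update, hvi, hvk]
      rw [heq] at hfl
      exact hno k hxk hfl

/-- A relation is a delta matroid iff its indicator signature is terraced:
whenever a pinning is empty, the pinnings by the two one-coordinate flips of the
partial configuration are linearly dependent as indicator functions, i.e.
one of them is empty or they are equal. -/
theorem deltaMatroid_iff_terraced (R : Set (V → Bool)) :
    DeltaMatroid R ↔
      ∀ (D : Finset V) (p : V → Bool) (i j : V), i ∈ D → j ∈ D →
        Pin R p D = ∅ →
        (Pin R (flipOne p i) D = ∅ ∨ Pin R (flipOne p j) D = ∅ ∨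
          Pin R (flipOne p i) D = Pin R (flipOne p j) D) := by
  constructor
  · intro hR D p i j hi hj hemp
    by_cases hij : i = j
    · subst hij; right; right; rfl
    by_cases e1 : Pin R (flipOne p i) D = ∅
    · left; exact e1
    by_cases e2 : Pin R (flipOne p j) D = ∅
    · right; left; exact e2
    right; right
    obtain ⟨a, ha⟩ := Set.nonempty_iff_ne_empty.mpr e1
    obtain ⟨b, hb⟩ := Set.nonempty_iff_ne_empty.mpr e2
    ext z
    constructor
    · intro hz; exact pin_trans hR hi hj hij hemp hb hz
    · intro hz; exact pin_trans hR hj hi (Ne.symm hij) hemp ha hz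
  · intro T x hx y hy i hxi
    exact exchange_of_terraced T _ x hx y hy i hxi le_rfl
end

section
/- Let R ⊆ {0,1}^V be a delta matroid that is also closed under meets and joins (i.e., is in IM-conj). Then R is basically binary: R is equivalent (up to renaming variables) to a Cartesian product of relations of arity at most two. -/
open Finset

variable {V : Type} [Fintype V] [DecidableEq V]

/-- A relation is basically binary if the variable set can be partitioned into blocks
of size at most two so that the relation is the product over the blocks of relations
on the individual blocks. -/
def BasicallyBinary (R : Set (V → Bool)) : Prop :=
  ∃ (B : Finset (Finset V)) (S : Finset V → Set (V → Bool)),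
    (∀ b ∈ B, b.card ≤ 2) ∧
    (∀ v : V, ∃ b ∈ B, v ∈ b) ∧
    (∀ b₁ ∈ B, ∀ b₂ ∈ B, b₁ ≠ b₂ → Disjoint b₁ b₂) ∧
    (∀ x, x ∈ R ↔ ∀ b ∈ B, ∃ y ∈ S b, ∀ v ∈ b, y v = x v)

section Aux

attribute [local instance] Classical.propDecidable

set_option linter.unusedSectionVars false

lemma aux_meet_closed (R : Set (V → Bool))
    (hmeet : ∀ x ∈ R, ∀ y ∈ R, (fun v => x v && y v) ∈ R) :
    ∀ s : Finset (V → Bool), s.Nonempty → (∀ y ∈ s, y ∈ R) →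
      (fun v => decide (∀ y ∈ s, y v = true)) ∈ R := by
  intro s
  induction s using Finset.induction_on with
  | empty => intro h; exact absurd rfl h.ne_empty
  | @insert a s ha ih =>
    intro _ hmem
    rcases s.eq_empty_or_nonempty with rfl | hs
    · have : (fun v => decide (∀ y ∈ insert a (∅ : Finset (V → Bool)), y v = true)) = a := by
        funext v; rw [Bool.eq_iff_iff]; simp
      rw [this]; exact hmem a (mem_insert_self a ∅)
    · have hg := ih hs (fun y hy => hmem y (mem_insert_of_mem hy))
      have hin := hmeet a (hmem a (mem_insert_self a s)) _ hg
      have heq : (fun v => decide (∀ y ∈ insert a s, y v = true))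
          = (fun v => a v && decide (∀ y ∈ s, y v = true)) := by
        funext v; rw [Bool.eq_iff_iff]; simp
      rw [heq]; exact hin

lemma aux_join_closed (R : Set (V → Bool))
    (hjoin : ∀ x ∈ R, ∀ y ∈ R, (fun v => x v || y v) ∈ R) :
    ∀ s : Finset (V → Bool), s.Nonempty → (∀ y ∈ s, y ∈ R) →
      (fun v => decide (∃ y ∈ s, y v = true)) ∈ R := by
  intro s
  induction s using Finset.induction_on with
  | empty => intro h; exact absurd rfl h.ne_empty
  | @insert a s ha ih =>
    intro _ hmem
    rcases s.eq_empty_or_nonempty with rfl | hs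
    · have : (fun v => decide (∃ y ∈ insert a (∅ : Finset (V → Bool)), y v = true)) = a := by
        funext v; rw [Bool.eq_iff_iff]; simp
      rw [this]; exact hmem a (mem_insert_self a ∅)
    · have hg := ih hs (fun y hy => hmem y (mem_insert_of_mem hy))
      have hin := hjoin a (hmem a (mem_insert_self a s)) _ hg
      have heq : (fun v => decide (∃ y ∈ insert a s, y v = true))
          = (fun v => a v || decide (∃ y ∈ s, y v = true)) := by
        funext v; rw [Bool.eq_iff_iff]; simp
      rw [heq]; exact hin

variable (R : Set (V → Bool))

def auxE (u v : V) : Prop := ∀ w ∈ R, w u = true → w v = true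

noncomputable def auxm : V → Bool := fun v => decide (∀ w ∈ R, w v = true)
noncomputable def auxM : V → Bool := fun v => decide (∃ w ∈ R, w v = true)
noncomputable def auxa (u : V) : V → Bool := fun v => decide (auxE R u v)

def auxUnp (v : V) : Prop := auxm R v = false ∧ auxM R v = true

lemma auxm_spec (v : V) : auxm R v = true ↔ ∀ w ∈ R, w v = true := by simp [auxm]
lemma auxM_spec (v : V) : auxM R v = true ↔ ∃ w ∈ R, w v = true := by simp [auxM]
lemma auxa_spec (u v : V) : auxa R u v = true ↔ auxE R u v := by simp [auxa]

lemma auxm_mem (hne : R.Nonempty)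
    (hmeet : ∀ x ∈ R, ∀ y ∈ R, (fun v => x v && y v) ∈ R) : auxm R ∈ R := by
  have hfin := Set.toFinite R
  have h := aux_meet_closed R hmeet hfin.toFinset
    (by rwa [Set.Finite.toFinset_nonempty]) (fun y hy => (Set.Finite.mem_toFinset hfin).1 hy)
  have : (fun v => decide (∀ y ∈ hfin.toFinset, y v = true)) = auxm R := by
    funext v; rw [Bool.eq_iff_iff]; simp only [decide_eq_true_eq, Set.Finite.mem_toFinset, auxm_spec]
  rwa [this] at h

lemma auxM_mem (hne : R.Nonempty)
    (hjoin : ∀ x ∈ R, ∀ y ∈ R, (fun v => x v || y v) ∈ R) : auxM R ∈ R := by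
  have hfin := Set.toFinite R
  have h := aux_join_closed R hjoin hfin.toFinset
    (by rwa [Set.Finite.toFinset_nonempty]) (fun y hy => (Set.Finite.mem_toFinset hfin).1 hy)
  have : (fun v => decide (∃ y ∈ hfin.toFinset, y v = true)) = auxM R := by
    funext v; rw [Bool.eq_iff_iff]; simp only [decide_eq_true_eq, Set.Finite.mem_toFinset, auxM_spec]
  rwa [this] at h

lemma auxa_mem (hM : auxM R ∈ R)
    (hmeet : ∀ x ∈ R, ∀ y ∈ R, (fun v => x v && y v) ∈ R)
    {u : V} (hu : auxUnp R u) : auxa R u ∈ R := by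
  have hfin := Set.toFinite R
  have hMm : auxM R ∈ hfin.toFinset.filter (fun w => w u = true) := by
    rw [Finset.mem_filter, Set.Finite.mem_toFinset]; exact ⟨hM, hu.2⟩
  have h := aux_meet_closed R hmeet (hfin.toFinset.filter (fun w => w u = true))
    ⟨_, hMm⟩ (fun y hy => (Set.Finite.mem_toFinset hfin).1 (Finset.mem_of_mem_filter y hy))
  have : (fun v => decide (∀ y ∈ hfin.toFinset.filter (fun w => w u = true), y v = true))
      = auxa R u := by
    funext v; rw [Bool.eq_iff_iff]
    simp only [auxa_spec, Finset.mem_filter, Set.Finite.mem_toFinset, decide_eq_true_eq, auxE]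
    constructor
    · intro h w hw hwu; exact h w ⟨hw, hwu⟩
    · rintro h w ⟨hw, hwu⟩; exact h w hw hwu
  rwa [this] at h

lemma aux_pin_or_unp (hne : R.Nonempty) (v : V) :
    (auxm R v = auxM R v) ∨ auxUnp R v := by
  obtain ⟨x0, hx0⟩ := hne
  cases hm : auxm R v <;> cases hM : auxM R v
  · exact Or.inl rfl
  · exact Or.inr ⟨hm, hM⟩
  · exfalso
    have : x0 v = true := (auxm_spec R v).1 hm x0 hx0
    have : auxM R v = true := (auxM_spec R v).2 ⟨x0, hx0, this⟩
    rw [hM] at this; exact Bool.false_ne_true this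
  · exact Or.inl rfl

lemma aux_pin_val {v : V} (hpin : auxm R v = auxM R v) {w : V → Bool} (hw : w ∈ R) :
    w v = auxm R v := by
  cases hm : auxm R v
  · cases hwv : w v
    · rfl
    · exfalso
      have : auxM R v = true := (auxM_spec R v).2 ⟨w, hw, hwv⟩
      rw [← hpin, hm] at this; exact Bool.false_ne_true this
  · exact (auxm_spec R v).1 hm w hw

lemma core_out (hdm : DeltaMatroid R) (hm : auxm R ∈ R) (hM : auxM R ∈ R)
    {i u w : V} (hiu : u ≠ i) (hiw : w ≠ i) (huw : u ≠ w)
    (hUi : auxUnp R i) (hUu : auxUnp R u) (hUw : auxUnp R w)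
    (h1 : auxE R i u) (h2 : auxE R i w) : False := by
  have hne : auxm R i ≠ auxM R i := by rw [hUi.1, hUi.2]; simp
  obtain ⟨j, -, hz⟩ := hdm _ hm _ hM i hne
  have hzi : flipS (auxm R) {i, j} i = true := by
    simp [flipS, hUi.1]
  have hzu : flipS (auxm R) {i, j} u = true := h1 _ hz hzi
  have hzw : flipS (auxm R) {i, j} w = true := h2 _ hz hzi
  have hu : u = j := by
    by_contra h
    have : flipS (auxm R) {i, j} u = auxm R u := by
      simp [flipS, h, hiu]
    rw [hzu, hUu.1] at this; simp at this
  have hw' : w = j := by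
    by_contra h
    have : flipS (auxm R) {i, j} w = auxm R w := by
      simp [flipS, h, hiw]
    rw [hzw, hUw.1] at this; simp at this
  exact huw (hu.trans hw'.symm)

lemma core_in (hdm : DeltaMatroid R) (hm : auxm R ∈ R) (hM : auxM R ∈ R)
    {i u w : V} (hiu : u ≠ i) (hiw : w ≠ i) (huw : u ≠ w)
    (hUi : auxUnp R i) (hUu : auxUnp R u) (hUw : auxUnp R w)
    (h1 : auxE R u i) (h2 : auxE R w i) : False := by
  have hne : auxM R i ≠ auxm R i := by rw [hUi.1, hUi.2]; simp
  obtain ⟨j, -, hz⟩ := hdm _ hM _ hm i hne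
  have hzi : flipS (auxM R) {i, j} i = false := by
    simp [flipS, hUi.2]
  have hzu : flipS (auxM R) {i, j} u = false := by
    cases h : flipS (auxM R) {i, j} u
    · rfl
    · exfalso; have := h1 _ hz h; rw [hzi] at this; exact Bool.false_ne_true this
  have hzw : flipS (auxM R) {i, j} w = false := by
    cases h : flipS (auxM R) {i, j} w
    · rfl
    · exfalso; have := h2 _ hz h; rw [hzi] at this; exact Bool.false_ne_true this
  have hu : u = j := by
    by_contra h
    have : flipS (auxM R) {i, j} u = auxM R u := by
      simp [flipS, h, hiu]
    rw [hzu, hUu.2] at this; simp at this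
  have hw' : w = j := by
    by_contra h
    have : flipS (auxM R) {i, j} w = auxM R w := by
      simp [flipS, h, hiw]
    rw [hzw, hUw.2] at this; simp at this
  exact huw (hu.trans hw'.symm)

def auxNb (u v : V) : Prop :=
  u ≠ v ∧ auxUnp R u ∧ auxUnp R v ∧ (auxE R u v ∨ auxE R v u)

lemma auxNb_symm {u v : V} (h : auxNb R u v) : auxNb R v u :=
  ⟨h.1.symm, h.2.2.1, h.2.1, h.2.2.2.symm⟩

lemma auxE_trans {a b c : V} (h1 : auxE R a b) (h2 : auxE R b c) : auxE R a c :=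
  fun w hw h => h2 w hw (h1 w hw h)

lemma auxNb_unique (hdm : DeltaMatroid R) (hm : auxm R ∈ R) (hM : auxM R ∈ R)
    {v a b : V} (h1 : auxNb R v a) (h2 : auxNb R v b) : a = b := by
  by_contra hab
  obtain ⟨hva, hUv, hUa, hEa⟩ := h1
  obtain ⟨hvb, -, hUb, hEb⟩ := h2
  rcases hEa with hEa | hEa <;> rcases hEb with hEb | hEb
  · exact core_out R hdm hm hM (Ne.symm hva) (Ne.symm hvb) hab hUv hUa hUb hEa hEb
  · exact core_out R hdm hm hM hvb hab hva hUb hUv hUa hEb (auxE_trans R hEb hEa)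
  · exact core_out R hdm hm hM hva (Ne.symm hab) hvb hUa hUv hUb hEa (auxE_trans R hEa hEb)
  · exact core_in R hdm hm hM (Ne.symm hva) (Ne.symm hvb) hab hUv hUa hUb hEa hEb

noncomputable def auxblk (v : V) : Finset V := insert v (Finset.univ.filter (auxNb R v))

lemma mem_auxblk {t v : V} : t ∈ auxblk R v ↔ t = v ∨ auxNb R v t := by
  simp [auxblk]

lemma mem_auxblk_self (v : V) : v ∈ auxblk R v := (mem_auxblk R).2 (Or.inl rfl)

lemma auxblk_card (hdm : DeltaMatroid R) (hm : auxm R ∈ R) (hM : auxM R ∈ R) (v : V) :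
    (auxblk R v).card ≤ 2 := by
  refine le_trans (Finset.card_insert_le _ _) ?_
  have : (Finset.univ.filter (auxNb R v)).card ≤ 1 := by
    rw [Finset.card_le_one]
    intro a ha b hb
    rw [Finset.mem_filter] at ha hb
    exact auxNb_unique R hdm hm hM ha.2 hb.2
  omega

lemma auxblk_eq_of_mem (hdm : DeltaMatroid R) (hm : auxm R ∈ R) (hM : auxM R ∈ R)
    {t v : V} (h : t ∈ auxblk R v) : auxblk R t = auxblk R v := by
  rcases (mem_auxblk R).1 h with rfl | hnb
  · rfl
  · ext a
    rw [mem_auxblk, mem_auxblk]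
    constructor
    · rintro (rfl | hta)
      · exact Or.inr hnb
      · exact Or.inl (auxNb_unique R hdm hm hM hta (auxNb_symm R hnb))
    · rintro (rfl | hva)
      · exact Or.inr (auxNb_symm R hnb)
      · exact Or.inl (auxNb_unique R hdm hm hM hva hnb)

end Aux

/-- A delta matroid that is closed under meets and joins (is in IM-conj)
is basically binary. -/
theorem deltaMatroid_imconj_basicallyBinary (R : Set (V → Bool))
    (hdm : DeltaMatroid R)
    (hmeet : ∀ x ∈ R, ∀ y ∈ R, (fun v => x v && y v) ∈ R)
    (hjoin : ∀ x ∈ R, ∀ y ∈ R, (fun v => x v || y v) ∈ R) :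
    BasicallyBinary R := by
  classical
  rcases Set.eq_empty_or_nonempty R with rfl | hne
  · -- empty case
    refine ⟨insert ∅ (Finset.univ.image fun v => ({v} : Finset V)), fun _ => ∅, ?_, ?_, ?_, ?_⟩
    · intro b hb
      rcases Finset.mem_insert.1 hb with rfl | hb
      · simp
      · rcases Finset.mem_image.1 hb with ⟨v, -, rfl⟩; simp
    · intro v
      exact ⟨{v}, Finset.mem_insert_of_mem (Finset.mem_image.2 ⟨v, Finset.mem_univ v, rfl⟩),
        Finset.mem_singleton_self v⟩
    · intro b₁ h₁ b₂ h₂ hneq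
      rcases Finset.mem_insert.1 h₁ with rfl | h₁
      · simp
      rcases Finset.mem_insert.1 h₂ with rfl | h₂
      · simp
      rcases Finset.mem_image.1 h₁ with ⟨u, -, rfl⟩
      rcases Finset.mem_image.1 h₂ with ⟨v, -, rfl⟩
      simp only [Finset.disjoint_singleton]
      intro h; exact hneq (by rw [h])
    · intro x
      simp only [Set.mem_empty_iff_false, false_iff]
      intro h
      rcases h ∅ (Finset.mem_insert_self _ _) with ⟨y, hy, -⟩
      exact hy
  · -- nonempty case
    have hm : auxm R ∈ R := auxm_mem R hne hmeet
    have hM : auxM R ∈ R := auxM_mem R hne hjoin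
    refine ⟨Finset.univ.image (auxblk R),
      fun b => {y | ∃ z ∈ R, ∀ v ∈ b, z v = y v}, ?_, ?_, ?_, ?_⟩
    · intro b hb
      rcases Finset.mem_image.1 hb with ⟨v, -, rfl⟩
      exact auxblk_card R hdm hm hM v
    · intro v
      exact ⟨auxblk R v, Finset.mem_image.2 ⟨v, Finset.mem_univ v, rfl⟩, mem_auxblk_self R v⟩
    · intro b₁ h₁ b₂ h₂ hneq
      by_contra hd
      rcases Finset.not_disjoint_iff.1 hd with ⟨t, ht₁, ht₂⟩
      rcases Finset.mem_image.1 h₁ with ⟨u, -, rfl⟩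
      rcases Finset.mem_image.1 h₂ with ⟨v, -, rfl⟩
      exact hneq ((auxblk_eq_of_mem R hdm hm hM ht₁).symm.trans
        (auxblk_eq_of_mem R hdm hm hM ht₂))
    · intro x
      constructor
      · intro hx b hb
        exact ⟨x, ⟨x, hx, fun _ _ => rfl⟩, fun _ _ => rfl⟩
      · intro h
        have hproj : ∀ v : V, ∃ z ∈ R, ∀ t ∈ auxblk R v, z t = x t := by
          intro v
          rcases h (auxblk R v) (Finset.mem_image.2 ⟨v, Finset.mem_univ v, rfl⟩) with
            ⟨y, ⟨z, hz, hzy⟩, hyx⟩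
          exact ⟨z, hz, fun t ht => (hzy t ht).trans (hyx t ht)⟩
        have hgmem : (fun v => decide (auxm R v = true ∨
            ∃ u, auxUnp R u ∧ x u = true ∧ auxE R u v)) ∈ R := by
          have hsub : ∀ y ∈ insert (auxm R)
              ((Finset.univ.filter (fun u => auxUnp R u ∧ x u = true)).image (auxa R)),
              y ∈ R := by
            intro y hy
            rcases Finset.mem_insert.1 hy with rfl | hy
            · exact hm
            · rcases Finset.mem_image.1 hy with ⟨u, hu, rfl⟩
              exact auxa_mem R hM hmeet (Finset.mem_filter.1 hu).2.1
          have hmem := aux_join_closed R hjoin _ (Finset.insert_nonempty _ _) hsub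
          have heq : (fun v => decide (∃ y ∈ insert (auxm R)
              ((Finset.univ.filter (fun u => auxUnp R u ∧ x u = true)).image (auxa R)),
              y v = true))
              = (fun v => decide (auxm R v = true ∨
                  ∃ u, auxUnp R u ∧ x u = true ∧ auxE R u v)) := by
            funext v
            rw [Bool.eq_iff_iff]
            simp only [decide_eq_true_eq, Finset.mem_insert, Finset.mem_image,
              Finset.mem_filter, Finset.mem_univ, true_and]
            constructor
            · rintro ⟨y, (rfl | ⟨u, ⟨hUu, hxu⟩, rfl⟩), hyv⟩
              · exact Or.inl hyv
              · exact Or.inr ⟨u, hUu, hxu, (auxa_spec R u v).1 hyv⟩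
            · rintro (hmv | ⟨u, hUu, hxu, hE⟩)
              · exact ⟨auxm R, Or.inl rfl, hmv⟩
              · exact ⟨auxa R u, Or.inr ⟨u, ⟨hUu, hxu⟩, rfl⟩, (auxa_spec R u v).2 hE⟩
          rw [← heq]
          convert hmem using 1
          funext v
          exact decide_eq_decide.mpr Iff.rfl
        have hgx : (fun v => decide (auxm R v = true ∨
            ∃ u, auxUnp R u ∧ x u = true ∧ auxE R u v)) = x := by
          funext v
          rw [Bool.eq_iff_iff]
          simp only [decide_eq_true_eq]
          rcases aux_pin_or_unp R hne v with hpin | hUv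
          · -- pinned coordinate
            have hxv : x v = auxm R v := by
              obtain ⟨z, hz, hzx⟩ := hproj v
              rw [← hzx v (mem_auxblk_self R v)]
              exact aux_pin_val R hpin hz
            constructor
            · rintro (hmv | ⟨u, hUu, hxu, hE⟩)
              · exact hxv.trans hmv
              · obtain ⟨w, hw, hwu⟩ := (auxM_spec R u).1 hUu.2
                have hwv : w v = true := hE w hw hwu
                have hMv : auxM R v = true := (auxM_spec R v).2 ⟨w, hw, hwv⟩
                exact hxv.trans (hpin.trans hMv)
            · intro hxv'
              exact Or.inl (hxv.symm.trans hxv')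
          · -- unpinned coordinate
            constructor
            · rintro (hmv | ⟨u, hUu, hxu, hE⟩)
              · exact absurd (hUv.1.symm.trans hmv) Bool.false_ne_true
              · by_contra h'
                have hxvf : x v = false := Bool.eq_false_iff.2 h'
                have hune : u ≠ v := by
                  intro e; rw [e, hxvf] at hxu; exact Bool.false_ne_true hxu
                have hNb : auxNb R u v := ⟨hune, hUu, hUv, Or.inl hE⟩
                have hvblk : v ∈ auxblk R u := (mem_auxblk R).2 (Or.inr hNb)
                obtain ⟨z, hz, hzx⟩ := hproj u
                have hzu : z u = true := (hzx u (mem_auxblk_self R u)).trans hxu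
                have hzv : z v = true := hE z hz hzu
                exact h' ((hzx v hvblk).symm.trans hzv)
            · intro hxv
              exact Or.inr ⟨v, hUv, hxv, fun w _ hw => hw⟩
        rwa [hgx] at hgmem
end

section
/- Let (F,G) be a pinning-minimal linearly independent pair of signatures on a finite variable set V: F and G are linearly independent, but for every non-empty partial configuration p, the pinnings F_p and G_p are linearly dependent. Then supp(F) ∪ supp(G) = {x, x̄} for some configuration x ∈ supp(F), where x̄ denotes the coordinatewise complement of x. -/
variable {V : Type} [Fintype V] [DecidableEq V]

/-- Two real-valued functions are linearly dependent. -/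
def LinDep {W : Type} (F G : W → ℝ) : Prop :=
  ∃ lam mu : ℝ, (lam ≠ 0 ∨ mu ≠ 0) ∧ ∀ x, lam * F x = mu * G x

private lemma claimC (a b l m l' m' : ℝ) (hab : a ≠ 0 ∨ b ≠ 0)
    (h1 : l * a = m * b) (h2 : l' * a = m' * b) : l * m' = l' * m := by
  rcases hab with ha | hb
  · have h : l * m' * a = l' * m * a := by linear_combination m' * h1 - m * h2
    exact mul_right_cancel₀ ha h
  · have h : l * m' * b = l' * m * b := by linear_combination l' * h1 - l * h2
    exact mul_right_cancel₀ hb h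

private lemma transfer (g d g' d' a b : ℝ) (h0 : g' ≠ 0 ∨ d' ≠ 0)
    (hpar : g * d' = g' * d) (h : g' * a = d' * b) : g * a = d * b := by
  rcases h0 with hg | hd
  · have hh : g' * (g * a) = g' * (d * b) := by linear_combination g * h + b * hpar
    exact mul_left_cancel₀ hg hh
  · have hh : d' * (g * a) = d' * (d * b) := by linear_combination d * h + a * hpar
    exact mul_left_cancel₀ hd hh

private lemma half (F G : (V → Bool) → ℝ)
    (hmin : ∀ (D : Finset V), D.Nonempty → ∀ p : V → Bool,
      LinDep (fun x => F (patch p x D)) (fun x => G (patch p x D)))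
    (v : V) (c : Bool) :
    ∃ l m : ℝ, (l ≠ 0 ∨ m ≠ 0) ∧ ∀ z : V → Bool, z v = c → l * F z = m * G z := by
  obtain ⟨l, m, h0, h⟩ := hmin {v} ⟨v, Finset.mem_singleton_self v⟩ (fun _ => c)
  refine ⟨l, m, h0, fun z hz => ?_⟩
  have hp : patch (fun _ => c) z {v} = z := by
    funext u
    simp only [patch, Finset.mem_singleton]
    split
    · next hu => subst hu; exact hz.symm
    · rfl
  simpa [hp] using h z

/-- A pinning-minimal linearly independent pair of signatures has support union
equal to a configuration together with its complement. -/
theorem minimal_linIndep_pair (F G : (V → Bool) → ℝ)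
    (hF : ∀ x, 0 ≤ F x) (hG : ∀ x, 0 ≤ G x)
    (hindep : ¬ LinDep F G)
    (hmin : ∀ (D : Finset V), D.Nonempty → ∀ p : V → Bool,
      LinDep (fun x => F (patch p x D)) (fun x => G (patch p x D))) :
    ∃ x : V → Bool, F x ≠ 0 ∧
      {y | F y ≠ 0} ∪ {y | G y ≠ 0} = {x, fun v => !x v} := by
  -- Any two distinct support points differ in every coordinate.
  have hS1 : ∀ x y : V → Bool, (F x ≠ 0 ∨ G x ≠ 0) → (F y ≠ 0 ∨ G y ≠ 0) →
      x ≠ y → ∀ v, x v ≠ y v := by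
    intro x y hx hy hxy v hv
    obtain ⟨w, hw⟩ := Function.ne_iff.mp hxy
    obtain ⟨a1, b1, h1ne, h1⟩ := half F G hmin v (x v)
    obtain ⟨a2, b2, h2ne, h2⟩ := half F G hmin w (x w)
    obtain ⟨a3, b3, h3ne, h3⟩ := half F G hmin w (y w)
    have hxv : a1 * F x = b1 * G x := h1 x rfl
    have hxw : a2 * F x = b2 * G x := h2 x rfl
    have hyv : a1 * F y = b1 * G y := h1 y hv.symm
    have hyw : a3 * F y = b3 * G y := h3 y rfl
    have c1 : a1 * b2 = a2 * b1 := claimC (F x) (G x) a1 b1 a2 b2 hx hxv hxw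
    have c2 : a1 * b3 = a3 * b1 := claimC (F y) (G y) a1 b1 a3 b3 hy hyv hyw
    have cpar : a2 * b3 = a3 * b2 :=
      claimC b1 a1 a2 b2 a3 b3 h1ne.symm (by linear_combination -c1) (by linear_combination -c2)
    apply hindep
    refine ⟨a2, b2, h2ne, fun z => ?_⟩
    by_cases hzw : z w = x w
    · exact h2 z hzw
    · have hzy : z w = y w := by
        cases hzz : z w <;> cases hxx : x w <;> cases hyy : y w <;> simp_all
      exact transfer a2 b2 a3 b3 (F z) (G z) h3ne cpar (h3 z hzy)
  -- F is not identically zero.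
  have hFne : ∃ z, F z ≠ 0 := by
    by_contra h
    push_neg at h
    exact hindep ⟨1, 0, Or.inl one_ne_zero, fun z => by simp [h z]⟩
  obtain ⟨x, hx⟩ := hFne
  -- there is another support point
  have hy : ∃ y, y ≠ x ∧ (F y ≠ 0 ∨ G y ≠ 0) := by
    by_contra h
    push_neg at h
    apply hindep
    refine ⟨G x, F x, Or.inr hx, fun z => ?_⟩
    by_cases hz : z = x
    · subst hz; ring
    · have := h z hz
      rw [this.1, this.2]; ring
  obtain ⟨y, hyx, hyS⟩ := hy
  have hxS : F x ≠ 0 ∨ G x ≠ 0 := Or.inl hx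
  have hcomp : y = fun v => !x v := by
    funext v
    have h := hS1 x y hxS hyS (Ne.symm hyx) v
    cases hxv : x v <;> cases hyv : y v <;> simp_all
  refine ⟨x, hx, ?_⟩
  ext z
  simp only [Set.mem_union, Set.mem_setOf_eq, Set.mem_insert_iff, Set.mem_singleton_iff]
  constructor
  · intro hz
    by_cases hzx : z = x
    · exact Or.inl hzx
    · right
      have := hS1 x z hxS hz (Ne.symm hzx)
      funext v
      have h := this v
      cases hxv : x v <;> cases hzv : z v <;> simp_all
  · intro hz
    rcases hz with hz | hz
    · subst hz; exact Or.inl hx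
    · subst hz
      rw [← hcomp]
      exact hyS
end

section
/- Let F: {0,1}^V → ℝ≥0 be a pinning-minimal non-logsupermodular signature: F is not logsupermodular, but every pinning of F by a non-empty partial configuration is logsupermodular. Then supp(F) ⊆ {0, x, x̄, 1} for some configuration x, where 0 and 1 denote the all-zeros and all-ones configurations and x̄ is the coordinatewise complement of x. -/
variable {V : Type} [Fintype V] [DecidableEq V]

/-- A signature is logsupermodular if F(x∧y)F(x∨y) ≥ F(x)F(y) for all x,y. -/
def LogSupermodular {W : Type} (F : (W → Bool) → ℝ) : Prop :=
  ∀ x y : W → Bool, F x * F y ≤ F (fun v => x v && y v) * F (fun v => x v || y v)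

lemma key_agree (F : (V → Bool) → ℝ)
    (hmin : ∀ (D : Finset V), D.Nonempty → ∀ p : V → Bool,
      LogSupermodular (fun x => F (patch p x D)))
    (x z : V → Bool) (h : ∃ v, x v = z v) :
    F x * F z ≤ F (fun v => x v && z v) * F (fun v => x v || z v) := by
  obtain ⟨v, hv⟩ := h
  have H := hmin {v} ⟨v, Finset.mem_singleton_self v⟩ x x z
  have e1 : patch x x {v} = x := by
    funext w; simp only [patch, Finset.mem_singleton]; split_ifs <;> rfl
  have e2 : patch x z {v} = z := by
    funext w; simp only [patch, Finset.mem_singleton]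
    split_ifs with h
    · subst h; exact hv
    · rfl
  have e3 : patch x (fun w => x w && z w) {v} = (fun w => x w && z w) := by
    funext w; simp only [patch, Finset.mem_singleton]
    split_ifs with h
    · subst h; rw [hv]; exact (Bool.and_self _).symm
    · rfl
  have e4 : patch x (fun w => x w || z w) {v} = (fun w => x w || z w) := by
    funext w; simp only [patch, Finset.mem_singleton]
    split_ifs with h
    · subst h; rw [hv]; exact (Bool.or_self _).symm
    · rfl
  simpa only [e1, e2, e3, e4] using H

/-- A pinning-minimal non-logsupermodular signature has support contained in
{0, x, x̄, 1} for some configuration x. -/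
theorem minimal_non_logsupermodular (F : (V → Bool) → ℝ)
    (h0 : ∀ x, 0 ≤ F x)
    (hnlsm : ¬ LogSupermodular F)
    (hmin : ∀ (D : Finset V), D.Nonempty → ∀ p : V → Bool,
      LogSupermodular (fun x => F (patch p x D))) :
    ∃ x : V → Bool,
      {y | F y ≠ 0} ⊆ {(fun _ => false), x, (fun v => !x v), (fun _ => true)} := by
  simp only [LogSupermodular, not_forall, not_le] at hnlsm
  obtain ⟨a, b, hab⟩ := hnlsm
  have hdiff : ∀ v, a v ≠ b v := by
    intro v hv
    exact absurd (key_agree F hmin a b ⟨v, hv⟩) (not_le.2 hab)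
  have hb : b = fun v => !a v := by
    funext v
    have := hdiff v
    revert this; cases a v <;> cases b v <;> simp
  subst hb
  have em : (fun v => a v && !a v) = (fun _ : V => false) := by
    funext v; cases a v <;> rfl
  have ej : (fun v => a v || !a v) = (fun _ : V => true) := by
    funext v; cases a v <;> rfl
  rw [em, ej] at hab
  refine ⟨a, fun y hy => ?_⟩
  simp only [Set.mem_setOf_eq] at hy
  by_contra hnot
  simp only [Set.mem_insert_iff, Set.mem_singleton_iff, not_or] at hnot
  obtain ⟨h0', hA, hAc, h1'⟩ := hnot
  obtain ⟨u, hu⟩ := Function.ne_iff.mp hA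
  obtain ⟨v, hv⟩ := Function.ne_iff.mp hAc
  obtain ⟨w, hw⟩ := Function.ne_iff.mp h0'
  obtain ⟨w', hw'⟩ := Function.ne_iff.mp h1'
  have hvv : a v = y v := by revert hv; cases a v <;> cases y v <;> simp
  have huu : (!a u) = y u := by revert hu; cases a u <;> cases y u <;> simp
  have hww : y w = true := by revert hw; cases y w <;> simp
  have hww' : y w' = false := by revert hw'; cases y w' <;> simp
  have I1 := key_agree F hmin a y ⟨v, hvv⟩
  have I2 := key_agree F hmin (fun v => !a v) y ⟨u, huu⟩
  have I3 := key_agree F hmin (fun v => a v && y v) (fun v => !a v && y v)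
    ⟨w', by simp [hww']⟩
  have I4 := key_agree F hmin (fun v => a v || y v) (fun v => !a v || y v)
    ⟨w, by simp [hww]⟩
  have r3m : (fun v => (a v && y v) && (!a v && y v)) = (fun _ : V => false) := by
    funext v; cases a v <;> cases y v <;> rfl
  have r3j : (fun v => (a v && y v) || (!a v && y v)) = y := by
    funext v; cases a v <;> cases y v <;> rfl
  have r4m : (fun v => (a v || y v) && (!a v || y v)) = y := by
    funext v; cases a v <;> cases y v <;> rfl
  have r4j : (fun v => (a v || y v) || (!a v || y v)) = (fun _ : V => true) := by
    funext v; cases a v <;> cases y v <;> rfl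
  rw [r3m, r3j] at I3
  rw [r4m, r4j] at I4
  have hY : 0 < F y := lt_of_le_of_ne (h0 y) (Ne.symm hy)
  have e1 : (F a * F y) * (F (fun v => !a v) * F y) ≤
      (F (fun v => a v && y v) * F (fun v => a v || y v)) *
      (F (fun v => !a v && y v) * F (fun v => !a v || y v)) :=
    mul_le_mul I1 I2 (mul_nonneg (h0 _) (h0 _)) (mul_nonneg (h0 _) (h0 _))
  have e2 : (F (fun v => a v && y v) * F (fun v => !a v && y v)) *
      (F (fun v => a v || y v) * F (fun v => !a v || y v)) ≤
      (F (fun _ => false) * F y) * (F y * F (fun _ => true)) :=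
    mul_le_mul I3 I4 (mul_nonneg (h0 _) (h0 _)) (mul_nonneg (h0 _) (h0 _))
  nlinarith [mul_pos hY hY, h0 a, h0 (fun v => !a v), h0 (fun _ : V => false),
    h0 (fun _ : V => true)]
end

section
/- Let R ⊆ {0,1}^V be a relation that is not closed under joins, but such that every pinning of R by a non-empty partial configuration is closed under joins. Then R = {0, x, x̄} or R = {x, x̄} for some configuration x, where 0 is the all-zeros configuration and x̄ is the coordinatewise complement of x. -/
variable {V : Type} [Fintype V] [DecidableEq V]

def JoinClosed (R : Set (V → Bool)) : Prop :=
  ∀ x ∈ R, ∀ y ∈ R, (fun v => x v || y v) ∈ R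

/-- A relation that is pinning-minimal subject to not being closed under joins
equals {0, x, x̄} or {x, x̄} for some configuration x. -/
theorem minimal_non_joinClosed (R : Set (V → Bool))
    (hnj : ¬ JoinClosed R)
    (hmin : ∀ (D : Finset V), D.Nonempty → ∀ p : V → Bool, JoinClosed (Pin R p D)) :
    ∃ x : V → Bool,
      R = {(fun _ => false), x, fun v => !x v} ∨ R = {x, fun v => !x v} := by
  simp only [JoinClosed, not_forall] at hnj
  obtain ⟨x, hx, y, hy, hxy⟩ := hnj
  -- key: two elements of R that agree at some coordinate have their join in R
  have key : ∀ z ∈ R, ∀ w ∈ R, ∀ u : V, z u = w u → (fun v => z v || w v) ∈ R := by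
    intro z hz w hw u hu
    have hpin := hmin {u} ⟨u, Finset.mem_singleton_self u⟩ z
    have h1 : z ∈ Pin R z {u} := by
      show patch z z {u} ∈ R
      have : patch z z {u} = z := by funext v; simp [patch]
      rwa [this]
    have h2 : w ∈ Pin R z {u} := by
      show patch z w {u} ∈ R
      have : patch z w {u} = w := by
        funext v
        simp only [patch, Finset.mem_singleton]
        split
        · subst ‹v = u›; exact hu
        · rfl
      rwa [this]
    have h3 := hpin z h1 w h2
    have heq : patch z (fun v => z v || w v) {u} = fun v => z v || w v := by
      funext v
      simp only [patch, Finset.mem_singleton]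
      split
      · subst ‹v = u›; rw [hu, Bool.or_self]
      · rfl
    have := h3
    simp only [Pin, Set.mem_setOf_eq] at this
    rwa [heq] at this
  -- y is the complement of x
  have hcomp : y = fun v => !x v := by
    funext v
    by_contra hne
    have hagree : x v = y v := by
      cases hx' : x v <;> cases hy' : y v <;> simp_all
    exact hxy (key x hx y hy v hagree)
  subst hcomp
  have hone : (fun _ : V => true) ∉ R := by
    intro h1
    apply hxy
    have : (fun v => x v || !x v) = (fun _ : V => true) := by funext v; simp
    rwa [this]
  have hsub : ∀ z ∈ R, z = (fun _ => false) ∨ z = x ∨ z = (fun v => !x v) := by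
    intro z hz
    by_contra hc
    push_neg at hc
    obtain ⟨h0, hzx, hzxc⟩ := hc
    by_cases hA : ∃ u, z u = true ∧ x u = true
    · obtain ⟨u₁, hzu₁, hxu₁⟩ := hA
      have ha : (fun v => z v || x v) ∈ R :=
        key z hz x hx u₁ (by rw [hzu₁, hxu₁])
      by_cases hB : ∃ u, z u = true ∧ x u = false
      · obtain ⟨u₂, hzu₂, hxu₂⟩ := hB
        have hb : (fun v => z v || !x v) ∈ R :=
          key z hz (fun v => !x v) hy u₂ (by simp [hzu₂, hxu₂])
        have hj := key _ ha _ hb u₁ (by simp [hzu₁])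
        apply hone
        have : (fun v => (z v || x v) || (z v || !x v)) = (fun _ : V => true) := by
          funext v; cases x v <;> simp
        rwa [this] at hj
      · -- z ≤ x ; since z ≠ x there is w with z w = false, x w = true
        push_neg at hB
        have : ∃ w, z w ≠ x w := by
          by_contra h
          push_neg at h
          exact hzx (funext h)
        obtain ⟨w, hw⟩ := this
        have hzw : z w = false := by
          cases hzw' : z w
          · rfl
          · exact absurd (hB w hzw') (by rw [hzw'] at hw; simpa using hw)
        have hxw : x w = true := by
          cases hxw' : x w
          · rw [hzw, hxw'] at hw; simp at hw
          · rfl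
        have hb : (fun v => z v || !x v) ∈ R :=
          key z hz (fun v => !x v) hy w (by simp [hzw, hxw])
        have hj := key _ hb x hx u₁ (by simp [hzu₁, hxu₁])
        apply hone
        have : (fun v => (z v || !x v) || x v) = (fun _ : V => true) := by
          funext v; cases x v <;> simp
        rwa [this] at hj
    · -- all true coordinates of z have x false
      push_neg at hA
      have hu : ∃ u, z u = true := by
        by_contra h
        push_neg at h
        exact h0 (funext fun v => by simpa using h v)
      obtain ⟨u, hzu⟩ := hu
      have hxu : x u = false := by
        cases hxu' : x u
        · rfl
        · exact absurd hxu' (hA u hzu)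
      -- since z ≠ x̄, there is w with z w = false, x w = false
      have : ∃ w, z w ≠ !x w := by
        by_contra h
        push_neg at h
        exact hzxc (funext h)
      obtain ⟨w, hw⟩ := this
      have hzw : z w = false := by
        cases hzw' : z w
        · rfl
        · have := hA w hzw'
          rw [hzw'] at hw
          cases hxw' : x w
          · rw [hxw'] at hw; simp at hw
          · exact absurd hxw' this
      have hxw : x w = false := by
        cases hxw' : x w
        · rfl
        · rw [hzw, hxw'] at hw; simp at hw
      have ha : (fun v => z v || x v) ∈ R :=
        key z hz x hx w (by rw [hzw, hxw])
      have hj := key _ ha (fun v => !x v) hy u (by simp [hzu, hxu])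
      apply hone
      have : (fun v => (z v || x v) || !x v) = (fun _ : V => true) := by
        funext v; cases x v <;> simp
      rwa [this] at hj
  by_cases h0 : (fun _ : V => false) ∈ R
  · refine ⟨x, Or.inl ?_⟩
    ext z
    simp only [Set.mem_insert_iff, Set.mem_singleton_iff]
    constructor
    · intro hz; exact hsub z hz
    · rintro (rfl | rfl | rfl)
      · exact h0
      · exact hx
      · exact hy
  · refine ⟨x, Or.inr ?_⟩
    ext z
    simp only [Set.mem_insert_iff, Set.mem_singleton_iff]
    constructor
    · intro hz
      rcases hsub z hz with rfl | rfl | rfl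
      · exact absurd hz h0
      · exact Or.inl rfl
      · exact Or.inr rfl
    · rintro (rfl | rfl)
      · exact hx
      · exact hy
end

section
/- Every delta matroid R ⊆ {0,1}^V that is (pinning-)minimal subject to not being basically binary has the 'sphere property': there exists a configuration x ∈ {0,1}^V and d ∈ {1,2} with |V| = 3, such that x^U ∉ R for all U ⊆ V with |U| < d and x^U ∈ R for all U ⊆ V with |U| = d. Consequently, the h-maximisation R_{h-max} with h(i) = 2x_i − 1 is a flip of PM₃. -/
open Finset

set_option linter.unusedSectionVars false

variable {V : Type} [Fintype V] [DecidableEq V]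

/-- The h-score of a configuration `y` for `h(i) = 2·x_i − 1`. -/
def hScore (x y : V → Bool) : ℤ :=
  ∑ v : V, (if y v then (2 * (if x v then (1 : ℤ) else 0) - 1) else 0)

/-- mixing closure along a block -/
def Split (R : Set (V → Bool)) (b : Finset V) : Prop :=
  ∀ x ∈ R, ∀ y ∈ R, patch x y b ∈ R

section Basic

variable {R : Set (V → Bool)}

lemma bb_small (h : Fintype.card V ≤ 2) : BasicallyBinary R := by
  refine ⟨{Finset.univ}, fun _ => R, ?_, ?_, ?_, ?_⟩
  · intro b hb; simp only [mem_singleton] at hb; subst hb; simpa using h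
  · intro v; exact ⟨Finset.univ, by simp⟩
  · intro b₁ h₁ b₂ h₂ hne; simp only [mem_singleton] at h₁ h₂; exact absurd (h₁.trans h₂.symm) hne
  · intro x
    constructor
    · intro hx b hb; exact ⟨x, hx, fun _ _ => rfl⟩
    · intro h
      obtain ⟨y, hy, hagree⟩ := h Finset.univ (by simp)
      have : y = x := funext fun v => hagree v (mem_univ v)
      exact this ▸ hy

lemma bb_empty (hV : Nonempty V) : BasicallyBinary (∅ : Set (V → Bool)) := by
  refine ⟨Finset.univ.image (fun v => {v}), fun _ => ∅, ?_, ?_, ?_, ?_⟩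
  · intro b hb; simp only [mem_image] at hb; obtain ⟨v, _, rfl⟩ := hb; simp
  · intro v; exact ⟨{v}, by simp, by simp⟩
  · intro b₁ h₁ b₂ h₂ hne
    simp only [mem_image] at h₁ h₂
    obtain ⟨v₁, _, rfl⟩ := h₁; obtain ⟨v₂, _, rfl⟩ := h₂
    simp only [ne_eq, Finset.singleton_inj] at hne
    simp only [Finset.disjoint_singleton]
    exact hne
  · intro x
    simp only [Set.mem_empty_iff_false, false_iff, not_forall]
    obtain ⟨v⟩ := hV
    exact ⟨{v}, by simp, by simp⟩

lemma split_empty : Split R (∅ : Finset V) := by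
  intro x _ y hy
  have : patch x y ∅ = y := funext fun v => by simp [patch]
  exact this ▸ hy

lemma split_union {b₁ b₂ : Finset V} (h₁ : Split R b₁) (h₂ : Split R b₂) :
    Split R (b₁ ∪ b₂) := by
  intro x hx y hy
  have h := h₁ x hx _ (h₂ x hx y hy)
  have e : patch x (patch x y b₂) b₁ = patch x y (b₁ ∪ b₂) := by
    funext v; simp only [patch, mem_union]; split_ifs <;> tauto
  exact e ▸ h

lemma bb_of_partition (hR : R.Nonempty) (P : Finset (Finset V))
    (hcard : ∀ b ∈ P, b.card ≤ 2) (hcover : ∀ v : V, ∃ b ∈ P, v ∈ b)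
    (hdisj : ∀ b₁ ∈ P, ∀ b₂ ∈ P, b₁ ≠ b₂ → Disjoint b₁ b₂)
    (hsplit : ∀ b ∈ P, Split R b) : BasicallyBinary R := by
  refine ⟨P, fun _ => R, hcard, hcover, hdisj, fun x => ⟨fun hx b _ => ⟨x, hx, fun _ _ => rfl⟩, ?_⟩⟩
  intro h
  have key : ∀ L : Finset (Finset V), L ⊆ P →
      ∃ z ∈ R, ∀ b ∈ L, ∀ v ∈ b, z v = x v := by
    intro L
    induction L using Finset.induction_on with
    | empty => exact fun _ => ⟨hR.choose, hR.choose_spec, by simp⟩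
    | @insert a L ha ih =>
      intro hsub
      have haP : a ∈ P := hsub (mem_insert_self a L)
      obtain ⟨z, hz, hzagree⟩ := ih (fun b hb => hsub (mem_insert_of_mem hb))
      obtain ⟨y, hy, hyagree⟩ := h a haP
      refine ⟨patch y z a, hsplit a haP y hy z hz, ?_⟩
      intro b hb v hv
      rcases mem_insert.1 hb with rfl | hbL
      · simp only [patch, if_pos hv]; exact hyagree v hv
      · have hne : b ≠ a := fun e => ha (e ▸ hbL)
        have : v ∉ a := fun hva =>
          (Finset.disjoint_left.1 (hdisj a haP b (hsub (mem_insert_of_mem hbL)) hne.symm)) hva hv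
        simp only [patch, if_neg this]; exact hzagree b hbL v hv
  obtain ⟨z, hz, hzagree⟩ := key P le_rfl
  have : z = x := funext fun v => by
    obtain ⟨b, hb, hvb⟩ := hcover v
    exact hzagree b hb v hvb
  exact this ▸ hz

lemma splits_of_bb (h : BasicallyBinary R) :
    ∃ B : Finset (Finset V), (∀ b ∈ B, b.card ≤ 2) ∧ (∀ v : V, ∃ b ∈ B, v ∈ b) ∧
      (∀ b₁ ∈ B, ∀ b₂ ∈ B, b₁ ≠ b₂ → Disjoint b₁ b₂) ∧ (∀ b ∈ B, Split R b) := by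
  obtain ⟨B, S, hcard, hcover, hdisj, hiff⟩ := h
  refine ⟨B, hcard, hcover, hdisj, ?_⟩
  intro b hb x hx y hy
  rw [hiff]
  intro b' hb'
  by_cases hbe : b' = b
  · subst hbe
    obtain ⟨w, hw, hagree⟩ := (hiff x).1 hx b' hb'
    exact ⟨w, hw, fun v hv => (hagree v hv).trans (by simp [patch, hv])⟩
  · obtain ⟨w, hw, hagree⟩ := (hiff y).1 hy b' hb'
    refine ⟨w, hw, fun v hv => (hagree v hv).trans ?_⟩
    have : v ∉ b := fun hvb =>
      (Finset.disjoint_left.1 (hdisj b hb b' hb' (Ne.symm hbe))) hvb hv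
    simp [patch, this]

lemma splits_of_pin {P : Set (V → Bool)} {D : Finset V}
    (hcyl : ∀ x y : V → Bool, (∀ v ∉ D, x v = y v) → (x ∈ P ↔ y ∈ P))
    (hbbP : BasicallyBinary P) :
    ∃ Q : Finset (Finset V), (∀ q ∈ Q, q.card ≤ 2) ∧ (∀ v ∉ D, ∃ q ∈ Q, v ∈ q) ∧
      (∀ q₁ ∈ Q, ∀ q₂ ∈ Q, q₁ ≠ q₂ → Disjoint q₁ q₂) ∧ (∀ q ∈ Q, Disjoint q D) ∧
      (∀ q ∈ Q, Split P q) := by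
  obtain ⟨B, hcard, hcover, hdisj, hsplit⟩ := splits_of_bb hbbP
  refine ⟨B.image (· \ D), ?_, ?_, ?_, ?_, ?_⟩
  · intro q hq; simp only [mem_image] at hq; obtain ⟨b, hb, rfl⟩ := hq
    exact le_trans (card_le_card (sdiff_subset)) (hcard b hb)
  · intro v hv; obtain ⟨b, hb, hvb⟩ := hcover v
    exact ⟨b \ D, mem_image_of_mem _ hb, mem_sdiff.2 ⟨hvb, hv⟩⟩
  · intro q₁ h₁ q₂ h₂ hne
    simp only [mem_image] at h₁ h₂
    obtain ⟨b₁, hb₁, rfl⟩ := h₁; obtain ⟨b₂, hb₂, rfl⟩ := h₂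
    have : b₁ ≠ b₂ := fun e => hne (e ▸ rfl)
    exact Finset.disjoint_of_subset_left sdiff_subset
      (Finset.disjoint_of_subset_right sdiff_subset (hdisj b₁ hb₁ b₂ hb₂ this))
  · intro q hq; simp only [mem_image] at hq; obtain ⟨b, _, rfl⟩ := hq
    exact sdiff_disjoint
  · intro q hq; simp only [mem_image] at hq; obtain ⟨b, hb, rfl⟩ := hq
    intro x hx y hy
    have h := hsplit b hb x hx y hy
    refine (hcyl _ _ ?_).2 h
    intro v hv
    simp only [patch, mem_sdiff]
    by_cases hvb : v ∈ b <;> simp [hvb, hv]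

lemma pin_cyl (R : Set (V → Bool)) (p : V → Bool) (D : Finset V) :
    ∀ x y : V → Bool, (∀ v ∉ D, x v = y v) → (x ∈ Pin R p D ↔ y ∈ Pin R p D) := by
  intro x y h
  have : patch p x D = patch p y D := funext fun v => by
    by_cases hv : v ∈ D <;> simp [patch, hv, h v]
  simp only [Pin, Set.mem_setOf_eq, this]

end Basic

section Slices

variable {R : Set (V → Bool)}

lemma slice_splits (hmin : ∀ D : Finset V, D.Nonempty → ∀ p : V → Bool, BasicallyBinary (Pin R p D))
    (w : V) (c : Bool) :
    ∃ Q : Finset (Finset V), (∀ q ∈ Q, q.card ≤ 2) ∧ (∀ v : V, v ≠ w → ∃ q ∈ Q, v ∈ q) ∧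
      (∀ q₁ ∈ Q, ∀ q₂ ∈ Q, q₁ ≠ q₂ → Disjoint q₁ q₂) ∧ (∀ q ∈ Q, w ∉ q) ∧
      (∀ q ∈ Q, Split {x ∈ R | x w = c} q) := by
  obtain ⟨Q, hQc, hQcov, hQd, hQD, hQs⟩ :=
    splits_of_pin (pin_cyl R (fun _ => c) {w}) (hmin {w} ⟨w, mem_singleton_self w⟩ (fun _ => c))
  refine ⟨Q, hQc, ?_, hQd, ?_, ?_⟩
  · intro v hv; exact hQcov v (by simpa using hv)
  · intro q hq; exact fun hwq => (Finset.disjoint_left.1 (hQD q hq)) hwq (mem_singleton_self w)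
  · intro q hq x hx y hy
    obtain ⟨hxR, hxw⟩ := hx
    obtain ⟨hyR, hyw⟩ := hy
    have hwq : w ∉ q := fun hwq => (Finset.disjoint_left.1 (hQD q hq)) hwq (mem_singleton_self w)
    have hmem : ∀ z : V → Bool, z ∈ R → z w = c → z ∈ Pin R (fun _ => c) {w} := by
      intro z hz hzw
      show patch (fun _ => c) z {w} ∈ R
      have : patch (fun _ => c) z {w} = z := by
        funext v
        simp only [patch, mem_singleton]
        split_ifs with h
        · exact (h ▸ hzw).symm
        · rfl
      exact this.symm ▸ hz
    have hz : patch x y q ∈ Pin R (fun _ => c) {w} := hQs q hq x (hmem x hxR hxw) y (hmem y hyR hyw)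
    have hzw : patch x y q w = c := by simp [patch, hwq, hyw]
    have e : patch (fun _ => c) (patch x y q) {w} = patch x y q := by
      funext v
      by_cases hv : v = w
      · subst hv; simp [patch, hwq, hyw]
      · simp [patch, hv]
    have hz2 : patch (fun _ => c) (patch x y q) {w} ∈ R := hz
    rw [e] at hz2
    exact ⟨hz2, hzw⟩

lemma bb_of_split_block (hmin : ∀ D : Finset V, D.Nonempty → ∀ p : V → Bool, BasicallyBinary (Pin R p D))
    (hR : R.Nonempty) (D : Finset V) (hD : D.Nonempty) (hDc : D.card ≤ 2) (hs : Split R D) :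
    BasicallyBinary R := by
  obtain ⟨r₀, hr₀⟩ := hR
  obtain ⟨Q, hQc, hQcov, hQd, hQD, hQs⟩ := splits_of_pin (pin_cyl R r₀ D) (hmin D hD r₀)
  have hRq : ∀ q ∈ Q, Split R q := by
    intro q hq x hx y hy
    have hmem : ∀ z ∈ R, z ∈ Pin R r₀ D := fun z hz => hs r₀ hr₀ z hz
    have hz' : patch r₀ (patch x y q) D ∈ R := hQs q hq x (hmem x hx) y (hmem y hy)
    have e : patch x y q = patch y (patch r₀ (patch x y q) D) D := by
      funext v
      by_cases hv : v ∈ D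
      · have hvq : v ∉ q := fun hvq => (Finset.disjoint_left.1 (hQD q hq)) hvq hv
        simp [patch, hv, hvq]
      · simp [patch, hv]
    rw [e]; exact hs y hy _ hz'
  refine bb_of_partition ⟨r₀, hr₀⟩ (insert D Q) ?_ ?_ ?_ ?_
  · intro b hb
    rcases mem_insert.1 hb with rfl | hbQ
    · exact hDc
    · exact hQc b hbQ
  · intro v
    by_cases hv : v ∈ D
    · exact ⟨D, mem_insert_self D Q, hv⟩
    · obtain ⟨q, hq, hvq⟩ := hQcov v hv
      exact ⟨q, mem_insert_of_mem hq, hvq⟩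
  · intro b₁ h₁ b₂ h₂ hne
    rcases mem_insert.1 h₁ with rfl | h₁Q
    · rcases mem_insert.1 h₂ with rfl | h₂Q
      · exact absurd rfl hne
      · exact (hQD b₂ h₂Q).symm
    · rcases mem_insert.1 h₂ with rfl | h₂Q
      · exact hQD b₁ h₁Q
      · exact hQd b₁ h₁Q b₂ h₂Q hne
  · intro b hb
    rcases mem_insert.1 hb with rfl | hbQ
    · exact hs
    · exact hRq b hbQ

lemma exists_notin (s : Finset V) (h : s.card < Fintype.card V) : ∃ v, v ∉ s := by
  by_contra h'
  push_neg at h'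
  have : (Finset.univ : Finset V) ⊆ s := fun v _ => h' v
  have := Finset.card_le_card this
  simp only [Finset.card_univ] at this
  omega

lemma exists_fourth (h4 : 4 ≤ Fintype.card V) (a b c : V) : ∃ d, d ≠ a ∧ d ≠ b ∧ d ≠ c := by
  obtain ⟨d, hd⟩ := exists_notin ({a, b, c} : Finset V) (by
    have h1 : ({a, b, c} : Finset V).card ≤ 3 := by
      refine le_trans (Finset.card_insert_le _ _) ?_
      have := Finset.card_insert_le b ({c} : Finset V)
      simp only [Finset.card_singleton] at this
      omega
    omega)
  simp only [mem_insert, mem_singleton, not_or] at hd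
  exact ⟨d, hd.1, hd.2.1, hd.2.2⟩

end Slices

lemma bool_ne_iff {a b : Bool} : a ≠ b ↔ a = !b := by cases a <;> cases b <;> simp

lemma bool_ne_not (c : Bool) : c ≠ !c := by cases c <;> simp

lemma pair_block {β : Finset V} {a b : V} (hab : a ≠ b) (ha : a ∈ β) (hb : b ∈ β)
    (hcard : β.card ≤ 2) : β = {a, b} := by
  refine (Finset.eq_of_subset_of_card_le ?_ ?_).symm
  · intro t ht
    rcases mem_insert.1 ht with rfl | ht
    · exact ha
    · rw [mem_singleton] at ht; subst ht; exact hb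
  · rw [Finset.card_pair hab]; exact hcard

section Part3

variable {R : Set (V → Bool)}

lemma part3 (hdm : DeltaMatroid R) (hbb : ¬ BasicallyBinary R)
    (hmin : ∀ D : Finset V, D.Nonempty → ∀ p : V → Bool, BasicallyBinary (Pin R p D))
    (h4 : 4 ≤ Fintype.card V) : False := by
  have hVne : Nonempty V := by rw [← Fintype.card_pos_iff]; omega
  rcases Set.eq_empty_or_nonempty R with rfl | hRne
  · exact hbb (bb_empty hVne)
  obtain ⟨r₀, hr₀⟩ := hRne
  obtain ⟨v⟩ := hVne
  by_cases hflip : ∀ x ∈ R, flipS x {v} ∈ R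
  · refine hbb (bb_of_split_block hmin ⟨r₀, hr₀⟩ {v} ⟨v, mem_singleton_self v⟩ (by simp) ?_)
    intro x hx y hy
    by_cases hxy : x v = y v
    · have e : patch x y {v} = y := by
        funext t; by_cases ht : t = v
        · subst ht; simp [patch, hxy]
        · simp [patch, ht]
      rw [e]; exact hy
    · have e : patch x y {v} = flipS y {v} := by
        funext t; by_cases ht : t = v
        · subst ht; simp only [patch, mem_singleton, if_pos rfl, flipS]
          exact bool_ne_iff.1 hxy
        · simp [patch, flipS, ht]
      rw [e]; exact hflip y hy
  push_neg at hflip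
  obtain ⟨x₀, hx₀R, hx0⟩ := hflip
  set c := x₀ v with hc
  by_cases hBne : ∃ y ∈ R, y v = !c
  swap
  · push_neg at hBne
    refine hbb (bb_of_split_block hmin ⟨r₀, hr₀⟩ {v} ⟨v, mem_singleton_self v⟩ (by simp) ?_)
    intro x hx y hy
    have hxv : x v = c := by
      have := hBne x hx; cases h1 : x v <;> cases h2 : c <;> simp_all
    have hyv : y v = c := by
      have := hBne y hy; cases h1 : y v <;> cases h2 : c <;> simp_all
    have e : patch x y {v} = y := by
      funext t; by_cases ht : t = v
      · subst ht; simp [patch, hxv, hyv]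
      · simp [patch, ht]
    rw [e]; exact hy
  obtain ⟨y₀, hy₀R, hy₀v⟩ := hBne
  obtain ⟨u, hune, humem⟩ := hdm x₀ hx₀R y₀ hy₀R v (by rw [hy₀v, hc]; exact bool_ne_not (x₀ v))
  have huv : u ≠ v := by
    rintro rfl
    have e : ({u, u} : Finset V) = {u} := by simp
    rw [e] at humem
    exact hx0 humem
  set x₁ := flipS x₀ {v, u} with hx₁def
  have hx₁R : x₁ ∈ R := humem
  have hx₁v : x₁ v = !c := by simp [hx₁def, flipS, hc]
  have hx₁u : x₁ u = !(x₀ u) := by simp [hx₁def, flipS, huv]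
  have hx₁t : ∀ t, t ≠ v → t ≠ u → x₁ t = x₀ t := by
    intro t h1 h2; simp [hx₁def, flipS, h1, h2]
  -- (C1) : slices at values of x₀ split along {v,u}
  have hC1 : ∀ u', u' ≠ v → u' ≠ u → Split {x ∈ R | x u' = x₀ u'} {v, u} := by
    intro u' h1 h2
    obtain ⟨Q, hQc, hQcov, hQd, hQw, hQs⟩ := slice_splits hmin u' (x₀ u')
    obtain ⟨β, hβQ, hvβ⟩ := hQcov v (Ne.symm h1)
    have hx₀S : x₀ ∈ {x ∈ R | x u' = x₀ u'} := ⟨hx₀R, rfl⟩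
    have hx₁S : x₁ ∈ {x ∈ R | x u' = x₀ u'} := ⟨hx₁R, hx₁t u' h1 h2⟩
    have huβ : u ∈ β := by
      by_contra huβ
      have hw := hQs β hβQ x₁ hx₁S x₀ hx₀S
      have e : patch x₁ x₀ β = flipS x₀ {v} := by
        funext t
        by_cases htβ : t ∈ β
        · by_cases htv : t = v
          · subst htv; simp [patch, flipS, htβ, hx₁v, hc]
          · have htu : t ≠ u := fun e => huβ (e ▸ htβ)
            simp [patch, flipS, htβ, htv, hx₁t t htv htu]
        · have htv : t ≠ v := fun e => htβ (e ▸ hvβ)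
          simp [patch, flipS, htβ, htv]
      rw [e] at hw
      exact absurd hw.1 hx0
    have hβeq : β = {v, u} := pair_block (Ne.symm huv) hvβ huβ (hQc β hβQ)
    exact hβeq ▸ hQs β hβQ
  -- (E1)
  have hE1 : ∀ j, j ≠ v → j ≠ u → flipS x₀ {v, j} ∉ R := by
    intro j hjv hju hzR
    obtain ⟨u'', h1, h2, h3⟩ := exists_fourth h4 v u j
    have hzS : flipS x₀ {v, j} ∈ {x ∈ R | x u'' = x₀ u''} :=
      ⟨hzR, by simp [flipS, h1, h3]⟩
    have hx₁S : x₁ ∈ {x ∈ R | x u'' = x₀ u''} := ⟨hx₁R, hx₁t u'' h1 h2⟩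
    have hw := hC1 u'' h1 h2 _ hzS _ hx₁S
    have e : patch (flipS x₀ {v, j}) x₁ {v, u} = flipS x₀ {v} := by
      funext t
      by_cases ht1 : t = v
      · subst ht1; simp [patch, flipS]
      by_cases ht2 : t = u
      · subst ht2; simp [patch, flipS, huv, Ne.symm hju]
      · simp [patch, flipS, ht1, ht2, hx₁t t ht1 ht2]
    rw [e] at hw
    exact hx0 hw.1
  -- (C2)
  have hC2 : ∀ y ∈ R, y v = !c → y u = !(x₀ u) := by
    intro y hyR hyv
    by_contra hyu
    have hyu' : y u = x₀ u := by
      cases h1 : x₀ u <;> cases h2 : y u <;> simp_all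
    by_cases hagree : ∃ u', u' ≠ v ∧ u' ≠ u ∧ y u' = x₀ u'
    · obtain ⟨u', k1, k2, k3⟩ := hagree
      have hw := hC1 u' k1 k2 y ⟨hyR, k3⟩ x₀ ⟨hx₀R, rfl⟩
      have e : patch y x₀ {v, u} = flipS x₀ {v} := by
        funext t
        by_cases ht1 : t = v
        · subst ht1; simp [patch, flipS, hyv, hc]
        by_cases ht2 : t = u
        · subst ht2; simp [patch, flipS, huv, hyu']
        · simp [patch, flipS, ht1, ht2]
      rw [e] at hw
      exact hx0 hw.1
    · push_neg at hagree
      obtain ⟨j, hj1, hj2⟩ := hdm x₀ hx₀R y hyR v (by rw [hyv, hc]; exact bool_ne_not (x₀ v))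
      rcases eq_or_ne j v with rfl | hjv
      · rw [show ({j, j} : Finset V) = {j} from by simp] at hj2
        exact hx0 hj2
      rcases eq_or_ne j u with rfl | hju
      · exact hj1 hyu'.symm
      · exact hE1 j hjv hju hj2
  -- (W11) : flipping at u within the c-slice
  have hSplitAu : ∀ x ∈ R, x v = c → ∀ y ∈ R, y v = c → x u ≠ y u →
      flipS y {u} ∈ R ∧ flipS y {u} v = c := by
    intro x hx hxv y hy hyv hxy
    obtain ⟨Q₀, hQ₀c, hQ₀cov, hQ₀d, hQ₀w, hQ₀s⟩ := slice_splits hmin v c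
    obtain ⟨γ, hγQ, huγ⟩ := hQ₀cov u huv
    obtain ⟨u', hu'⟩ := exists_notin (insert v γ) (by
      have h1 := hQ₀c γ hγQ
      have h2 := card_insert_le v γ
      omega)
    rw [mem_insert, not_or] at hu'
    obtain ⟨hu'v, hu'γ⟩ := hu'
    obtain ⟨γ', hγ'Q, hu'γ'⟩ := hQ₀cov u' hu'v
    have hu'u : u' ≠ u := fun e => hu'γ (e ▸ huγ)
    have huγ' : u ∉ γ' := by
      intro huγ'
      have hne : γ ≠ γ' := fun e => hu'γ (e.symm ▸ hu'γ')
      exact (Finset.disjoint_left.1 (hQ₀d γ hγQ γ' hγ'Q hne)) huγ huγ'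
    have hvγ' : v ∉ γ' := hQ₀w γ' hγ'Q
    have hxt : patch x₀ x γ' ∈ {x ∈ R | x v = c} := hQ₀s γ' hγ'Q x₀ ⟨hx₀R, hc.symm⟩ x ⟨hx, hxv⟩
    have hyt : patch x₀ y γ' ∈ {x ∈ R | x v = c} := hQ₀s γ' hγ'Q x₀ ⟨hx₀R, hc.symm⟩ y ⟨hy, hyv⟩
    have hxtS : patch x₀ x γ' ∈ {x ∈ R | x u' = x₀ u'} := ⟨hxt.1, by simp [patch, hu'γ']⟩
    have hytS : patch x₀ y γ' ∈ {x ∈ R | x u' = x₀ u'} := ⟨hyt.1, by simp [patch, hu'γ']⟩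
    have hz := hC1 u' hu'v hu'u _ hxtS _ hytS
    have e1 : patch (patch x₀ x γ') (patch x₀ y γ') {v, u} = flipS (patch x₀ y γ') {u} := by
      funext t
      by_cases ht1 : t = v
      · subst ht1; simp [patch, flipS, hvγ', Ne.symm huv, hxv, hyv]
      by_cases ht2 : t = u
      · subst ht2
        have l1 : patch (patch x₀ x γ') (patch x₀ y γ') {v, t} t = x t := by
          simp [patch, huγ']
        have l2 : flipS (patch x₀ y γ') {t} t = !(y t) := by
          simp [flipS, patch, huγ']
        rw [l1, l2]
        exact bool_ne_iff.1 hxy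
      · simp [patch, flipS, ht1, ht2]
    rw [e1] at hz
    have hzA : flipS (patch x₀ y γ') {u} ∈ {x ∈ R | x v = c} :=
      ⟨hz.1, by simp [flipS, patch, Ne.symm huv, hvγ', hyv]⟩
    have hfin := hQ₀s γ' hγ'Q y ⟨hy, hyv⟩ _ hzA
    have e2 : patch y (flipS (patch x₀ y γ') {u}) γ' = flipS y {u} := by
      funext t
      by_cases htγ : t ∈ γ'
      · have htu : t ≠ u := fun e => huγ' (e ▸ htγ)
        simp [patch, flipS, htγ, htu]
      by_cases ht2 : t = u
      · subst ht2; simp [patch, flipS, htγ]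
      · simp [patch, flipS, htγ, ht2]
    rw [e2] at hfin
    exact hfin
  -- (W12) : completing A-elements to B-elements
  have hD : ∀ y ∈ R, y v = c →
      (fun t => if t = v then !c else if t = u then !(x₀ u) else y t) ∈ R := by
    intro y hyR hyv
    by_cases hagree : ∃ u', u' ≠ v ∧ u' ≠ u ∧ y u' = x₀ u'
    · obtain ⟨u', k1, k2, k3⟩ := hagree
      have hw := hC1 u' k1 k2 x₁ ⟨hx₁R, hx₁t u' k1 k2⟩ y ⟨hyR, k3⟩
      have e : patch x₁ y {v, u} = (fun t => if t = v then !c else if t = u then !(x₀ u) else y t) := by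
        funext t
        by_cases ht1 : t = v
        · subst ht1; simp [patch, hx₁v]
        by_cases ht2 : t = u
        · subst ht2; simp [patch, hx₁u, ht1]
        · simp [patch, ht1, ht2]
      rw [e] at hw
      exact hw.1
    · push_neg at hagree
      have hag : ∀ u', u' ≠ v → u' ≠ u → y u' = !(x₀ u') := fun u' k1 k2 =>
        bool_ne_iff.1 (hagree u' k1 k2)
      by_cases hyu : y u = x₀ u
      · obtain ⟨j, hj1, hj2⟩ := hdm y hyR x₁ hx₁R v (by rw [hyv, hx₁v]; exact bool_ne_not c)
        rcases eq_or_ne j v with rfl | hjv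
        · rw [show ({j, j} : Finset V) = {j} from by simp] at hj2
          exfalso
          have h2 := hC2 _ hj2 (by simp [flipS, hyv])
          have e : flipS y {j} u = y u := by simp [flipS, huv]
          rw [e, hyu] at h2
          exact (bool_ne_not (x₀ u)) h2
        rcases eq_or_ne j u with rfl | hju
        · have e : flipS y {v, j} = (fun t => if t = v then !c else if t = j then !(x₀ j) else y t) := by
            funext t
            by_cases ht1 : t = v
            · subst ht1; simp [flipS, hyv]
            by_cases ht2 : t = j
            · subst ht2; simp [flipS, ht1, hyu]
            · simp [flipS, ht1, ht2]
          rw [← e]; exact hj2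
        · exfalso
          have h2 := hC2 _ hj2 (by simp [flipS, hyv])
          have e : flipS y {v, j} u = y u := by simp [flipS, huv, (Ne.symm hju : u ≠ j)]
          rw [e, hyu] at h2
          exact (bool_ne_not (x₀ u)) h2
      · have hyu' : y u = !(x₀ u) := bool_ne_iff.1 hyu
        obtain ⟨j, hj1, hj2⟩ := hdm y hyR x₁ hx₁R v (by rw [hyv, hx₁v]; exact bool_ne_not c)
        rcases eq_or_ne j v with rfl | hjv
        · rw [show ({j, j} : Finset V) = {j} from by simp] at hj2
          have e : flipS y {j} = (fun t => if t = j then !c else if t = u then !(x₀ u) else y t) := by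
            funext t
            by_cases ht1 : t = j
            · subst ht1; simp [flipS, hyv]
            by_cases ht2 : t = u
            · subst ht2; simp [flipS, ht1, hyu']
            · simp [flipS, ht1, ht2]
          rw [← e]; exact hj2
        rcases eq_or_ne j u with rfl | hju
        · exact absurd (by rw [hyu', hx₁u] : y j = x₁ j) hj1
        · have hzR : flipS y {v, j} ∈ R := hj2
          have hzv : flipS y {v, j} v = !c := by simp [flipS, hyv]
          have hzu : flipS y {v, j} u = !(x₀ u) := by
            simp [flipS, huv, (Ne.symm hju : u ≠ j), hyu']
          have hzt : ∀ t, t ≠ v → t ≠ j → flipS y {v, j} t = y t := fun t k1 k2 => by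
            simp [flipS, k1, k2]
          obtain ⟨u', k1, k2, k3⟩ := exists_fourth h4 v u j
          obtain ⟨Q, hQc, hQcov, hQd, hQw, hQs⟩ := slice_splits hmin u' (!(x₀ u'))
          obtain ⟨β, hβQ, hvβ⟩ := hQcov v (Ne.symm k1)
          have hyS : y ∈ {x ∈ R | x u' = !(x₀ u')} := ⟨hyR, hag u' k1 k2⟩
          have hy' := hSplitAu x₀ hx₀R hc.symm y hyR hyv (by rw [hyu']; exact bool_ne_not (x₀ u))
          have hy'S : flipS y {u} ∈ {x ∈ R | x u' = !(x₀ u')} :=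
            ⟨hy'.1, by simp [flipS, k2]; exact hag u' k1 k2⟩
          have hzS : flipS y {v, j} ∈ {x ∈ R | x u' = !(x₀ u')} :=
            ⟨hzR, by rw [hzt u' k1 k3]; exact hag u' k1 k2⟩
          by_cases huβ : u ∈ β
          · have hβeq : β = {v, u} := pair_block (Ne.symm huv) hvβ huβ (hQc β hβQ)
            have hw := (hβeq ▸ hQs β hβQ) _ hzS y hyS
            have e : patch (flipS y {v, j}) y {v, u} =
                (fun t => if t = v then !c else if t = u then !(x₀ u) else y t) := by
              funext t
              by_cases ht1 : t = v
              · subst ht1; simp [patch, hzv]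
              by_cases ht2 : t = u
              · subst ht2; simp [patch, ht1, hzu]
              · simp [patch, ht1, ht2]
            rw [e] at hw
            exact hw.1
          · exfalso
            have hw := hQs β hβQ _ hzS (flipS y {u}) hy'S
            have h2 := hC2 _ hw.1 (by simp [patch, hvβ, hzv])
            have e : patch (flipS y {v, j}) (flipS y {u}) β u = x₀ u := by
              simp [patch, flipS, huβ, hyu']
            rw [e] at h2
            exact (bool_ne_not (x₀ u)) h2
  -- (W13)
  have hCc : ∀ y ∈ R, y v = !c → ∃ z, z ∈ R ∧ z v = c ∧ ∀ t, t ≠ v → t ≠ u → z t = y t := by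
    intro y hyR hyv
    by_cases hagree : ∃ u', u' ≠ v ∧ u' ≠ u ∧ y u' = x₀ u'
    · obtain ⟨u', k1, k2, k3⟩ := hagree
      have hw := hC1 u' k1 k2 x₀ ⟨hx₀R, rfl⟩ y ⟨hyR, k3⟩
      refine ⟨patch x₀ y {v, u}, hw.1, by simp [patch, hc], ?_⟩
      intro t k1' k2'
      simp [patch, k1', k2']
    · push_neg at hagree
      have hag : ∀ u', u' ≠ v → u' ≠ u → y u' = !(x₀ u') := fun u' k1 k2 =>
        bool_ne_iff.1 (hagree u' k1 k2)
      have hyu : y u = !(x₀ u) := hC2 y hyR hyv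
      obtain ⟨j, hj1, hj2⟩ := hdm y hyR x₀ hx₀R v (by
        rw [hyv, hc]; exact Ne.symm (bool_ne_not (x₀ v)))
      rcases eq_or_ne j v with rfl | hjv
      · rw [show ({j, j} : Finset V) = {j} from by simp] at hj2
        refine ⟨flipS y {j}, hj2, by simp [flipS, hyv], ?_⟩
        intro t k1' k2'
        simp [flipS, k1']
      rcases eq_or_ne j u with rfl | hju
      · refine ⟨flipS y {v, j}, hj2, by simp [flipS, hyv], ?_⟩
        intro t k1' k2'
        simp [flipS, k1', k2']
      · have hz'R : flipS y {v, j} ∈ R := hj2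
        have hz'v : flipS y {v, j} v = c := by simp [flipS, hyv]
        have hz'u : flipS y {v, j} u = !(x₀ u) := by
          simp [flipS, huv, (Ne.symm hju : u ≠ j), hyu]
        have hz't : ∀ t, t ≠ v → t ≠ j → flipS y {v, j} t = y t := fun t k1 k2 => by
          simp [flipS, k1, k2]
        obtain ⟨u', k1, k2, k3⟩ := exists_fourth h4 v u j
        obtain ⟨Q, hQc, hQcov, hQd, hQw, hQs⟩ := slice_splits hmin u' (!(x₀ u'))
        obtain ⟨β, hβQ, hvβ⟩ := hQcov v (Ne.symm k1)
        have hyS : y ∈ {x ∈ R | x u' = !(x₀ u')} := ⟨hyR, hag u' k1 k2⟩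
        have hz'S : flipS y {v, j} ∈ {x ∈ R | x u' = !(x₀ u')} :=
          ⟨hz'R, by rw [hz't u' k1 k3]; exact hag u' k1 k2⟩
        by_cases hjβ : j ∈ β
        · exfalso
          have hm := hSplitAu x₀ hx₀R hc.symm _ hz'R hz'v (by rw [hz'u]; exact bool_ne_not (x₀ u))
          have hmS : flipS (flipS y {v, j}) {u} ∈ {x ∈ R | x u' = !(x₀ u')} := by
            refine ⟨hm.1, ?_⟩
            have e : flipS (flipS y {v, j}) {u} u' = flipS y {v, j} u' := by simp [flipS, k2]
            rw [e, hz't u' k1 k3]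
            exact hag u' k1 k2
          have hw := hQs β hβQ y hyS _ hmS
          have hβeq : β = {v, j} := pair_block (Ne.symm hjv) hvβ hjβ (hQc β hβQ)
          have huβ : u ∉ β := by
            rw [hβeq]
            simp [huv, (Ne.symm hju : u ≠ j)]
          have h2 := hC2 _ hw.1 (by simp [patch, hvβ, hyv])
          have e : patch y (flipS (flipS y {v, j}) {u}) β u = x₀ u := by
            simp [patch, flipS, huβ, huv, (Ne.symm hju : u ≠ j), hyu]
          rw [e] at h2
          exact (bool_ne_not (x₀ u)) h2
        · have hw := hQs β hβQ _ hz'S y hyS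
          refine ⟨patch (flipS y {v, j}) y β, hw.1, by simp [patch, hvβ, hz'v], ?_⟩
          intro t k1' k2'
          by_cases htβ : t ∈ β
          · have htj : t ≠ j := fun e => hjβ (e ▸ htβ)
            simp [patch, htβ, hz't t k1' htj]
          · simp [patch, htβ]
  -- Split R {v,u}
  have hSvu : Split R {v, u} := by
    intro x hx y hy
    rcases eq_or_ne (x v) c with hxv | hxv'
    · rcases eq_or_ne (y v) c with hyv | hyv'
      · by_cases hxy : x u = y u
        · have e : patch x y {v, u} = y := by
            funext t
            by_cases ht1 : t = v
            · subst ht1; simp [patch, hxv, hyv]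
            by_cases ht2 : t = u
            · subst ht2; simp [patch, hxy, ht1]
            · simp [patch, ht1, ht2]
          rw [e]; exact hy
        · have hf := hSplitAu x hx hxv y hy hyv hxy
          have e : patch x y {v, u} = flipS y {u} := by
            funext t
            by_cases ht1 : t = v
            · subst ht1; simp [patch, flipS, Ne.symm huv, hxv, hyv]
            by_cases ht2 : t = u
            · subst ht2; simp [patch, flipS, ht1]
              exact bool_ne_iff.1 hxy
            · simp [patch, flipS, ht1, ht2]
          rw [e]; exact hf.1
      · have hyv : y v = !c := bool_ne_iff.1 hyv'
        obtain ⟨z, hzR, hzv, hzrest⟩ := hCc y hy hyv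
        by_cases hzu : z u = x u
        · have e : patch x y {v, u} = z := by
            funext t
            by_cases ht1 : t = v
            · subst ht1; simp [patch, hxv, hzv]
            by_cases ht2 : t = u
            · subst ht2; simp [patch, ht1, hzu.symm]
            · simp [patch, ht1, ht2, (hzrest t ht1 ht2).symm]
          rw [e]; exact hzR
        · have hf := hSplitAu x hx hxv z hzR hzv (fun e => hzu e.symm)
          have e : patch x y {v, u} = flipS z {u} := by
            funext t
            by_cases ht1 : t = v
            · subst ht1; simp [patch, flipS, Ne.symm huv, hxv, hzv]
            by_cases ht2 : t = u
            · subst ht2; simp [patch, flipS, ht1]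
              exact bool_ne_iff.1 (fun e => hzu e.symm)
            · simp [patch, flipS, ht1, ht2, (hzrest t ht1 ht2).symm]
          rw [e]; exact hf.1
    · have hxv : x v = !c := bool_ne_iff.1 hxv'
      rcases eq_or_ne (y v) c with hyv | hyv'
      · have hxu := hC2 x hx hxv
        have hyh := hD y hy hyv
        have e : patch x y {v, u} =
            (fun t => if t = v then !c else if t = u then !(x₀ u) else y t) := by
          funext t
          by_cases ht1 : t = v
          · subst ht1; simp [patch, hxv]
          by_cases ht2 : t = u
          · subst ht2; simp [patch, ht1, hxu]
          · simp [patch, ht1, ht2]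
        rw [e]; exact hyh
      · have hyv : y v = !c := bool_ne_iff.1 hyv'
        have hxu := hC2 x hx hxv
        have hyu := hC2 y hy hyv
        have e : patch x y {v, u} = y := by
          funext t
          by_cases ht1 : t = v
          · subst ht1; simp [patch, hxv, hyv]
          by_cases ht2 : t = u
          · subst ht2; simp [patch, ht1, hxu, hyu]
          · simp [patch, ht1, ht2]
        rw [e]; exact hy
  exact hbb (bb_of_split_block hmin ⟨r₀, hr₀⟩ {v, u} ⟨v, by simp⟩
    (le_of_eq (Finset.card_pair (Ne.symm huv))) hSvu)

end Part3

section Fin3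

def dm3 (R : Finset (Fin 3 → Bool)) : Prop :=
  ∀ x ∈ R, ∀ y ∈ R, ∀ i, x i ≠ y i → ∃ j, x j ≠ y j ∧ flipS x {i, j} ∈ R

def split3 (R : Finset (Fin 3 → Bool)) (b : Finset (Fin 3)) : Prop :=
  ∀ x ∈ R, ∀ y ∈ R, patch x y b ∈ R

def parts3 : Finset (Finset (Finset (Fin 3))) :=
  { {{0}, {1}, {2}}, {{0, 1}, {2}}, {{0, 2}, {1}}, {{1, 2}, {0}} }

def bb3 (R : Finset (Fin 3 → Bool)) : Prop := ∃ P ∈ parts3, ∀ b ∈ P, split3 R b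

def sphere3 (R : Finset (Fin 3 → Bool)) : Prop :=
  ∃ x : Fin 3 → Bool,
    ((∀ U : Finset (Fin 3), U.card < 1 → flipS x U ∉ R) ∧
      (∀ U : Finset (Fin 3), U.card = 1 → flipS x U ∈ R)) ∨
    ((∀ U : Finset (Fin 3), U.card < 2 → flipS x U ∉ R) ∧
      (∀ U : Finset (Fin 3), U.card = 2 → flipS x U ∈ R))

instance : DecidablePred dm3 := fun R => by unfold dm3; infer_instance
instance : DecidablePred bb3 := fun R => by unfold bb3 split3; infer_instance
instance : DecidablePred sphere3 := fun R => by unfold sphere3; infer_instance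

set_option maxHeartbeats 4000000 in
set_option maxRecDepth 100000 in
theorem check3 : ∀ R : Finset (Fin 3 → Bool), ¬ bb3 R → dm3 R → sphere3 R := by decide

set_option maxRecDepth 100000 in
theorem parts3_props : ∀ P ∈ parts3, (∀ b ∈ P, b.card ≤ 2) ∧ (∀ i : Fin 3, ∃ b ∈ P, i ∈ b) ∧
    (∀ b₁ ∈ P, ∀ b₂ ∈ P, b₁ ≠ b₂ → ∀ t ∈ b₁, t ∉ b₂) := by decide

end Fin3

section Transfer

variable {W : Type} [DecidableEq W]

lemma flipS_comp (e : V ≃ W) (x : W → Bool) (U : Finset V) :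
    flipS (x ∘ e) U = (flipS x (U.image e)) ∘ e := by
  funext w
  have h : (e w ∈ U.image e) ↔ w ∈ U := by
    constructor
    · intro h; obtain ⟨u, hu, heq⟩ := Finset.mem_image.1 h
      rwa [← e.injective heq]
    · exact fun h => Finset.mem_image_of_mem e h
  simp [flipS, Function.comp, h]

lemma patch_comp (e : V ≃ W) (x y : W → Bool) (b : Finset V) :
    patch (x ∘ e) (y ∘ e) b = (patch x y (b.image e)) ∘ e := by
  funext w
  have h : (e w ∈ b.image e) ↔ w ∈ b := by
    constructor
    · intro h; obtain ⟨u, hu, heq⟩ := Finset.mem_image.1 h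
      rwa [← e.injective heq]
    · exact fun h => Finset.mem_image_of_mem e h
  simp [patch, Function.comp, h]

end Transfer

section Part2

variable {R : Set (V → Bool)}

lemma card_eq_one_iff_existsUnique {s : Finset V} : s.card = 1 ↔ ∃! a, a ∈ s := by
  constructor
  · intro h
    obtain ⟨a, rfl⟩ := Finset.card_eq_one.1 h
    exact ⟨a, mem_singleton_self a, fun b hb => mem_singleton.1 hb⟩
  · rintro ⟨a, ha, hu⟩
    have : s = {a} := by
      ext b
      simp only [mem_singleton]
      exact ⟨fun hb => hu b hb, fun e => e ▸ ha⟩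
    simp [this]

lemma sphere_final (R : Set (V → Bool)) (h3 : Fintype.card V = 3) (x : V → Bool) (d : ℕ)
    (hd : d = 1 ∨ d = 2)
    (hlt : ∀ U : Finset V, U.card < d → flipS x U ∉ R)
    (heq : ∀ U : Finset V, U.card = d → flipS x U ∈ R) :
    ∃ U' : Finset V, {y | y ∈ R ∧ ∀ z ∈ R, hScore x z ≤ hScore x y} =
      {y | ∃! v, flipS y U' v = true} := by
  classical
  set D : (V → Bool) → Finset V := fun y => univ.filter (fun w => y w ≠ x w) with hD
  have l1 : ∀ y, flipS x (D y) = y := by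
    intro y; funext w
    by_cases h : y w = x w
    · have hw : w ∉ D y := by simp [hD, h]
      simp [flipS, hw, h]
    · have hw : w ∈ D y := by simp [hD, h]
      simp only [flipS, if_pos hw]
      cases hx : x w <;> cases hy : y w <;> simp_all
  have hS : ∀ y, hScore x y = ((univ.filter (fun w => x w = true)).card : ℤ) - ((D y).card : ℤ) := by
    intro y
    unfold hScore
    have hpt : ∀ v : V, (if y v then (2 * (if x v then (1:ℤ) else 0) - 1) else 0)
        = (if x v = true then (1:ℤ) else 0) - (if y v ≠ x v then (1:ℤ) else 0) := by
      intro v; cases hx : x v <;> cases hy : y v <;> simp [hx, hy]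
    rw [Finset.sum_congr rfl (fun v _ => hpt v), Finset.sum_sub_distrib]
    rw [Finset.sum_boole, Finset.sum_boole]
  have l3 : ∀ y ∈ R, d ≤ (D y).card := by
    intro y hy
    by_contra hlt'
    push_neg at hlt'
    exact hlt (D y) hlt' (by rw [l1]; exact hy)
  obtain ⟨U₀, hU₀sub, hU₀card⟩ := Finset.exists_subset_card_eq (s := (univ : Finset V)) (n := d)
    (by rw [Finset.card_univ, h3]; omega)
  have hz₀ : flipS x U₀ ∈ R := heq U₀ hU₀card
  have hDz₀ : D (flipS x U₀) = U₀ := by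
    ext w
    by_cases h : w ∈ U₀
    · simp [hD, flipS, h]
    · simp [hD, flipS, h]
  have hmax : {y | y ∈ R ∧ ∀ z ∈ R, hScore x z ≤ hScore x y} = {y | (D y).card = d} := by
    ext y
    simp only [Set.mem_setOf_eq]
    constructor
    · rintro ⟨hyR, hymax⟩
      refine le_antisymm ?_ (l3 y hyR)
      have hh := hymax _ hz₀
      rw [hS, hS, hDz₀, hU₀card] at hh
      omega
    · intro hycard
      have hyR : y ∈ R := by rw [← l1 y]; exact heq _ hycard
      refine ⟨hyR, fun z hz => ?_⟩
      rw [hS, hS]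
      have := l3 z hz
      omega
  rcases hd with rfl | rfl
  · refine ⟨univ.filter (fun w => x w = true), ?_⟩
    rw [hmax]
    ext y
    simp only [Set.mem_setOf_eq]
    have key : ∀ w, (flipS y (univ.filter (fun w => x w = true)) w = true) ↔ w ∈ D y := by
      intro w
      by_cases hxw : x w = true <;> cases hyw : y w <;>
        simp [flipS, hD, hxw, hyw] <;> simp_all
    constructor
    · intro h1
      rw [card_eq_one_iff_existsUnique] at h1
      obtain ⟨a, ha, hu⟩ := h1
      exact ⟨a, (key a).2 ha, fun b hb => hu b ((key b).1 hb)⟩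
    · rintro ⟨a, ha, hu⟩
      rw [card_eq_one_iff_existsUnique]
      exact ⟨a, (key a).1 ha, fun b hb => hu b ((key b).2 hb)⟩
  · refine ⟨univ.filter (fun w => x w = false), ?_⟩
    rw [hmax]
    ext y
    simp only [Set.mem_setOf_eq]
    have key : ∀ w, (flipS y (univ.filter (fun w => x w = false)) w = true) ↔ w ∉ D y := by
      intro w
      by_cases hxw : x w = true <;> cases hyw : y w <;>
        simp [flipS, hD, hxw, hyw] <;> simp_all
    constructor
    · intro h2
      have h1 : (univ \ D y).card = 1 := by
        rw [Finset.card_sdiff_of_subset (subset_univ _), Finset.card_univ, h3, h2]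
      rw [card_eq_one_iff_existsUnique] at h1
      obtain ⟨a, ha, hu⟩ := h1
      have ha' : a ∉ D y := (Finset.mem_sdiff.1 ha).2
      exact ⟨a, (key a).2 ha', fun b hb =>
        hu b (Finset.mem_sdiff.2 ⟨mem_univ b, (key b).1 hb⟩)⟩
    · rintro ⟨a, ha, hu⟩
      have h1 : (univ \ D y).card = 1 := _root_.card_eq_one_iff_existsUnique.2
        ⟨a, Finset.mem_sdiff.2 ⟨mem_univ a, (key a).1 ha⟩,
          fun b hb => hu b ((key b).2 (Finset.mem_sdiff.1 hb).2)⟩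
      have hle := Finset.card_le_univ (D y)
      rw [Finset.card_sdiff_of_subset (subset_univ _), Finset.card_univ, h3] at h1
      rw [h3] at hle
      omega

lemma part2 (hdm : DeltaMatroid R) (hbb : ¬ BasicallyBinary R) (h3 : Fintype.card V = 3) :
    ∃ (x : V → Bool) (d : ℕ), (d = 1 ∨ d = 2) ∧
      (∀ U : Finset V, U.card < d → flipS x U ∉ R) ∧
      (∀ U : Finset V, U.card = d → flipS x U ∈ R) := by
  classical
  have hVne : Nonempty V := by rw [← Fintype.card_pos_iff]; omega
  have hRne : R.Nonempty := by
    rcases Set.eq_empty_or_nonempty R with rfl | h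
    · exact absurd (bb_empty hVne) hbb
    · exact h
  have e : V ≃ Fin 3 := Fintype.equivFinOfCardEq h3
  set R3 : Finset (Fin 3 → Bool) := univ.filter (fun z => z ∘ e ∈ R) with hR3
  have hmem : ∀ z : Fin 3 → Bool, z ∈ R3 ↔ z ∘ e ∈ R := by intro z; simp [hR3]
  have hdm3 : dm3 R3 := by
    intro x hx y hy i hne
    obtain ⟨j, hjne, hjmem⟩ := hdm (x ∘ e) ((hmem x).1 hx) (y ∘ e) ((hmem y).1 hy) (e.symm i)
      (by simpa using hne)
    refine ⟨e j, by simpa using hjne, ?_⟩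
    rw [hmem]
    have himg : ({e.symm i, j} : Finset V).image e = {i, e j} := by
      rw [Finset.image_insert, Finset.image_singleton, Equiv.apply_symm_apply]
    have hcomm := flipS_comp e x ({e.symm i, j} : Finset V)
    rw [himg] at hcomm
    rw [← hcomm]
    exact hjmem
  have hnbb3 : ¬ bb3 R3 := by
    rintro ⟨P, hP, hsplits⟩
    apply hbb
    obtain ⟨hPc, hPcov, hPdisj⟩ := parts3_props P hP
    refine bb_of_partition hRne (P.image (fun b => b.image e.symm)) ?_ ?_ ?_ ?_
    · intro b hb
      obtain ⟨b0, hb0, rfl⟩ := Finset.mem_image.1 hb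
      rw [Finset.card_image_of_injective _ e.symm.injective]
      exact hPc b0 hb0
    · intro v
      obtain ⟨b0, hb0, hvb0⟩ := hPcov (e v)
      refine ⟨b0.image e.symm, Finset.mem_image_of_mem _ hb0, ?_⟩
      have hv : e.symm (e v) = v := e.symm_apply_apply v
      exact hv ▸ Finset.mem_image_of_mem _ hvb0
    · intro b₁ h₁ b₂ h₂ hne
      obtain ⟨c₁, hc₁, rfl⟩ := Finset.mem_image.1 h₁
      obtain ⟨c₂, hc₂, rfl⟩ := Finset.mem_image.1 h₂
      have hcne : c₁ ≠ c₂ := fun h => hne (h ▸ rfl)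
      rw [Finset.disjoint_left]
      intro t ht1 ht2
      obtain ⟨t₁, ht₁, rfl⟩ := Finset.mem_image.1 ht1
      obtain ⟨t₂, ht₂, heq2⟩ := Finset.mem_image.1 ht2
      have htt : t₂ = t₁ := e.symm.injective heq2
      exact hPdisj c₁ hc₁ c₂ hc₂ hcne t₁ ht₁ (htt ▸ ht₂)
    · intro b hb
      obtain ⟨b0, hb0, rfl⟩ := Finset.mem_image.1 hb
      intro x hx y hy
      have e1 : (x ∘ e.symm) ∘ e = x := by funext w; simp
      have e2 : (y ∘ e.symm) ∘ e = y := by funext w; simp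
      have hx3 : x ∘ e.symm ∈ R3 := (hmem _).2 (by rw [e1]; exact hx)
      have hy3 : y ∘ e.symm ∈ R3 := (hmem _).2 (by rw [e2]; exact hy)
      have h3s := hsplits b0 hb0 _ hx3 _ hy3
      rw [hmem] at h3s
      have hcomm := patch_comp e (x ∘ e.symm) (y ∘ e.symm) (b0.image e.symm)
      have e3 : (b0.image e.symm).image e = b0 := by
        rw [Finset.image_image]
        have : (e ∘ e.symm : Fin 3 → Fin 3) = id := by funext t; simp
        rw [this, Finset.image_id]
      rw [e1, e2, e3] at hcomm
      rw [hcomm]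
      exact h3s
  obtain ⟨x3, hx3⟩ := check3 R3 hnbb3 hdm3
  have htrans : ∀ d : ℕ,
      ((∀ U : Finset (Fin 3), U.card < d → flipS x3 U ∉ R3) ∧
        (∀ U : Finset (Fin 3), U.card = d → flipS x3 U ∈ R3)) →
      (∀ U : Finset V, U.card < d → flipS (x3 ∘ e) U ∉ R) ∧
        (∀ U : Finset V, U.card = d → flipS (x3 ∘ e) U ∈ R) := by
    rintro d ⟨hlt3, heq3⟩
    constructor
    · intro U hU hmemU
      rw [flipS_comp e x3 U] at hmemU
      have hmm : flipS x3 (U.image e) ∈ R3 := (hmem _).2 hmemU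
      exact hlt3 (U.image e)
        (by rw [Finset.card_image_of_injective _ e.injective]; exact hU) hmm
    · intro U hU
      have hmm : flipS x3 (U.image e) ∈ R3 := heq3 (U.image e)
        (by rw [Finset.card_image_of_injective _ e.injective]; exact hU)
      rw [hmem] at hmm
      rw [flipS_comp e x3 U]
      exact hmm
  rcases hx3 with h1 | h2
  · obtain ⟨hlt, heq⟩ := htrans 1 h1
    exact ⟨x3 ∘ e, 1, Or.inl rfl, hlt, heq⟩
  · obtain ⟨hlt, heq⟩ := htrans 2 h2
    exact ⟨x3 ∘ e, 2, Or.inr rfl, hlt, heq⟩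

end Part2

/-- A delta matroid that is pinning-minimal subject to not being basically binary has
arity 3 and the sphere property, and the corresponding h-maximisation is a flip of PM₃. -/
theorem minimal_nonBasicallyBinary_deltaMatroid (R : Set (V → Bool))
    (hdm : DeltaMatroid R)
    (hbb : ¬ BasicallyBinary R)
    (hmin : ∀ (D : Finset V), D.Nonempty → ∀ p : V → Bool, BasicallyBinary (Pin R p D)) :
    Fintype.card V = 3 ∧
    ∃ (x : V → Bool) (d : ℕ), (d = 1 ∨ d = 2) ∧
      (∀ U : Finset V, U.card < d → flipS x U ∉ R) ∧
      (∀ U : Finset V, U.card = d → flipS x U ∈ R) ∧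
      ∃ U' : Finset V,
        {y | y ∈ R ∧ ∀ z ∈ R, hScore x z ≤ hScore x y} =
          {y | ∃! v, flipS y U' v = true} := by
  have h3 : Fintype.card V = 3 := by
    by_contra h
    rcases Nat.lt_or_ge (Fintype.card V) 3 with hlt | hge
    · exact hbb (bb_small (by omega))
    · exact part3 hdm hbb hmin (by omega)
  obtain ⟨x, d, hd, hlt, heq⟩ := part2 hdm hbb h3
  exact ⟨h3, x, d, hd, hlt, heq, sphere_final R h3 x d hd hlt heq⟩
end

section
/- Every pinning-minimal non-IM-terraced signature is equivalent (after renaming variables) to a signature F on {1,…,k} such that: (a) the pinning of F by the partial configuration p with p(1)=0, p(2)=1 is identically zero; and (b) there exist a configuration z of {3,…,k} and a non-degenerate arity-2 signature T such that for all x, y₃,…,y_k ∈ {0,1}: F(x,x,y₃,…,y_k) = T(y₃,x) if (y₃,…,y_k) ∈ {z, z̄}, and F(x,x,y₃,…,y_k) = 0 otherwise. -/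
variable {V : Type} [Fintype V] [DecidableEq V]

/-- A signature is IM-terraced if for every partial configuration `p` (domain `D`) and
`i,j ∈ D` with `p i ≠ p j`, whenever the pinning by `p` is identically zero, the
pinnings by the flips of `p` at `i` and at `j` are linearly dependent. -/
def IMTerraced (F : (V → Bool) → ℝ) : Prop :=
  ∀ (D : Finset V) (p : V → Bool) (i j : V), i ∈ D → j ∈ D → p i ≠ p j →
    (∀ x, F (patch p x D) = 0) →
    LinDep (fun x => F (patch (flipOne p i) x D)) (fun x => F (patch (flipOne p j) x D))

lemma lindep_symm {W : Type} {F G : W → ℝ} (h : LinDep F G) : LinDep G F := by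
  obtain ⟨l, m, h1, h2⟩ := h
  exact ⟨m, l, h1.symm, fun x => (h2 x).symm⟩

lemma bool_eq_or_eq_not (a b : Bool) : a = b ∨ a = !b := by
  cases a <;> cases b <;> simp

lemma patch_congr {D : Finset V} {p p' : V → Bool} (h : ∀ v ∈ D, p v = p' v) (x : V → Bool) :
    patch p x D = patch p' x D := by
  funext v
  by_cases hv : v ∈ D
  · simp [patch, hv, h v hv]
  · simp [patch, hv]

lemma patch_patch (p q x : V → Bool) (D E : Finset V) :
    patch p (patch q x E) D = patch (fun v => if v ∈ D then p v else q v) x (D ∪ E) := by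
  funext v
  by_cases h1 : v ∈ D <;> by_cases h2 : v ∈ E <;> simp [patch, h1, h2]

lemma flipOne_self (p : V → Bool) (i : V) : flipOne p i i = !p i := by
  simp [flipOne]

lemma flipOne_other (p : V → Bool) {i u : V} (h : u ≠ i) : flipOne p i u = p u := by
  simp [flipOne, Function.update_apply, h]

lemma tri_aux {α : Type} (A B : α → ℝ) (hA : ∀ x, 0 ≤ A x) (hB : ∀ x, 0 ≤ B x)
    (P : α → Prop) (lam mu : ℝ) (hne : lam ≠ 0 ∨ mu ≠ 0)
    (heq : ∀ x, P x → lam * B x = mu * A x) :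
    (∀ x, P x → A x = 0) ∨ (∀ x, P x → B x = 0) ∨
      (∃ r, 0 < r ∧ ∀ x, P x → A x = r * B x) := by
  rcases eq_or_ne lam 0 with hl | hl
  · left
    intro x hx
    have hm : mu ≠ 0 := hne.resolve_left (not_not_intro hl)
    have := heq x hx
    rw [hl, zero_mul] at this
    exact (mul_eq_zero.mp this.symm).resolve_left hm
  rcases eq_or_ne mu 0 with hm | hm
  · right; left
    intro x hx
    have := heq x hx
    rw [hm, zero_mul] at this
    exact (mul_eq_zero.mp this).resolve_left hl
  rcases lt_trichotomy (lam * mu) 0 with hs | hs | hs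
  · left
    intro x hx
    have h := heq x hx
    have h1 : mu * mu * A x = lam * mu * B x := by rw [mul_assoc, ← h]; ring
    have h1b : lam * mu * B x ≤ 0 := mul_nonpos_of_nonpos_of_nonneg hs.le (hB x)
    have hmu2 : 0 < mu * mu := mul_self_pos.mpr hm
    exact le_antisymm (by nlinarith [hA x]) (hA x)
  · exact absurd hs (by simp [hl, hm])
  · right; right
    refine ⟨lam / mu, ?_, ?_⟩
    · rcases lt_trichotomy mu 0 with h | h | h
      · have : lam < 0 := by nlinarith
        exact div_pos_of_neg_of_neg this h
      · exact absurd h hm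
      · have : 0 < lam := by nlinarith
        exact div_pos this h
    · intro x hx
      have h := heq x hx
      field_simp
      linarith

/-- Structure of a pinning-minimal non-IM-terraced signature: after renaming the
variables to `{0,…,k+2}`, pinning coordinates 0 ↦ false, 1 ↦ true kills the signature,
and on the diagonal (coordinate 0 = coordinate 1) the signature is supported on a
configuration `z` of the remaining coordinates and its complement, with values given by
a non-degenerate binary signature `T` of the third coordinate and the diagonal value. -/
theorem minimal_non_IMTerraced (F : (V → Bool) → ℝ)
    (h0 : ∀ x, 0 ≤ F x)
    (hnt : ¬ IMTerraced F)
    (hmin : ∀ (D : Finset V), D.Nonempty → ∀ p : V → Bool,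
      IMTerraced (fun x => F (patch p x D))) :
    ∃ (k : ℕ) (e : Fin (k + 3) ≃ V) (z : Fin (k + 3) → Bool) (T : Bool → Bool → ℝ),
      T false false * T true true ≠ T false true * T true false ∧
      (∀ y : Fin (k + 3) → Bool, y 0 = false → y 1 = true →
        F (fun v => y (e.symm v)) = 0) ∧
      (∀ (c : Bool) (y : Fin (k + 3) → Bool), y 0 = c → y 1 = c →
        F (fun v => y (e.symm v)) =
          if (∀ i : Fin (k + 3), 2 ≤ (i : ℕ) → y i = z i) ∨
             (∀ i : Fin (k + 3), 2 ≤ (i : ℕ) → y i = !z i)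
          then T (y 2) c else 0) := by
  classical
  simp only [IMTerraced] at hnt
  push_neg at hnt
  obtain ⟨D₀, p₀, i0, j0, hi0, hj0, hpij0, hz0, hnd0⟩ := hnt
  have hij0 : i0 ≠ j0 := fun h => hpij0 (by rw [h])
  have hsub : ({i0, j0} : Finset V) ⊆ D₀ := by
    intro v hv
    rcases Finset.mem_insert.mp hv with h | h
    · exact h ▸ hi0
    · exact (Finset.mem_singleton.mp h) ▸ hj0
  -- Step 1: the witness pin must be exactly {i0, j0}
  have hD : D₀ = {i0, j0} := by
    by_cases hne : (D₀ \ ({i0, j0} : Finset V)).Nonempty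
    · exfalso
      apply hnd0
      have hIM := hmin _ hne p₀
      have key := hIM {i0, j0} p₀ i0 j0 (by simp) (by simp) hpij0 ?_
      · have e1 : ∀ x, patch p₀ (patch (flipOne p₀ i0) x ({i0, j0} : Finset V)) (D₀ \ {i0, j0})
            = patch (flipOne p₀ i0) x D₀ := by
          intro x
          rw [patch_patch, Finset.sdiff_union_of_subset hsub]
          refine patch_congr (fun v hv => ?_) x
          by_cases h : v ∈ D₀ \ ({i0, j0} : Finset V)
          · have hvi : v ≠ i0 := by
              intro h'
              exact (Finset.mem_sdiff.mp h).2 (by simp [h'])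
            rw [if_pos h, flipOne_other p₀ hvi]
          · rw [if_neg h]
        have e2 : ∀ x, patch p₀ (patch (flipOne p₀ j0) x ({i0, j0} : Finset V)) (D₀ \ {i0, j0})
            = patch (flipOne p₀ j0) x D₀ := by
          intro x
          rw [patch_patch, Finset.sdiff_union_of_subset hsub]
          refine patch_congr (fun v hv => ?_) x
          by_cases h : v ∈ D₀ \ ({i0, j0} : Finset V)
          · have hvj : v ≠ j0 := by
              intro h'
              exact (Finset.mem_sdiff.mp h).2 (by simp [h'])
            rw [if_pos h, flipOne_other p₀ hvj]
          · rw [if_neg h]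
        simpa only [e1, e2] using key
      · intro x
        have e0 : patch p₀ (patch p₀ x ({i0, j0} : Finset V)) (D₀ \ {i0, j0})
            = patch p₀ x D₀ := by
          rw [patch_patch, Finset.sdiff_union_of_subset hsub]
          refine patch_congr (fun v hv => ?_) x
          split <;> rfl
        simpa only [e0] using hz0 x
    · have hemp : D₀ \ ({i0, j0} : Finset V) = ∅ := Finset.not_nonempty_iff_eq_empty.mp hne
      refine Finset.Subset.antisymm (fun v hv => ?_) hsub
      by_contra hv'
      have : v ∈ D₀ \ ({i0, j0} : Finset V) := Finset.mem_sdiff.mpr ⟨hv, hv'⟩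
      rw [hemp] at this
      exact absurd this (Finset.notMem_empty v)
  subst hD
  -- Step 2: normalize so that the zero pin is (i ↦ false, j ↦ true)
  have main : ∃ i j : V, i ≠ j ∧
      (∀ x, F (patch (fun u => if u = j then true else false) x ({i, j} : Finset V)) = 0) ∧
      ¬ LinDep (fun x => F (patch (fun _ => true) x ({i, j} : Finset V)))
               (fun x => F (patch (fun _ => false) x ({i, j} : Finset V))) := by
    cases hpi : p₀ i0
    · -- p₀ i0 = false, p₀ j0 = true
      have hpj : p₀ j0 = true := by
        cases h : p₀ j0
        · exact absurd (hpi.trans h.symm) hpij0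
        · rfl
      refine ⟨i0, j0, hij0, fun x => ?_, ?_⟩
      · rw [patch_congr (p' := p₀) (fun v hv => ?_) x]
        · exact hz0 x
        · rcases Finset.mem_insert.mp hv with h | h
          · subst h; simp [hij0, hpi]
          · rw [Finset.mem_singleton.mp h]; simp [hpj]
      · have eA : (fun x => F (patch (flipOne p₀ i0) x ({i0, j0} : Finset V)))
            = (fun x => F (patch (fun _ => true) x ({i0, j0} : Finset V))) := by
          funext x
          rw [patch_congr (p' := fun _ => true) (fun v hv => ?_) x]
          rcases Finset.mem_insert.mp hv with h | h
          · subst h; rw [flipOne_self, hpi]; rfl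
          · rw [Finset.mem_singleton.mp h, flipOne_other p₀ hij0.symm, hpj]
        have eB : (fun x => F (patch (flipOne p₀ j0) x ({i0, j0} : Finset V)))
            = (fun x => F (patch (fun _ => false) x ({i0, j0} : Finset V))) := by
          funext x
          rw [patch_congr (p' := fun _ => false) (fun v hv => ?_) x]
          rcases Finset.mem_insert.mp hv with h | h
          · subst h; rw [flipOne_other p₀ hij0, hpi]
          · rw [Finset.mem_singleton.mp h, flipOne_self, hpj]; rfl
        rw [eA, eB] at hnd0
        exact hnd0
    · -- p₀ i0 = true, p₀ j0 = false : swap roles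
      have hpj : p₀ j0 = false := by
        cases h : p₀ j0
        · rfl
        · exact absurd (hpi.trans h.symm) hpij0
      refine ⟨j0, i0, hij0.symm, fun x => ?_, ?_⟩
      · rw [Finset.pair_comm j0 i0]
        rw [patch_congr (p' := p₀) (fun v hv => ?_) x]
        · exact hz0 x
        · rcases Finset.mem_insert.mp hv with h | h
          · subst h; simp [hpi]
          · rw [Finset.mem_singleton.mp h]; simp [hij0.symm, hpj]
      · have eA : (fun x => F (patch (flipOne p₀ i0) x ({i0, j0} : Finset V)))
            = (fun x => F (patch (fun _ => false) x ({i0, j0} : Finset V))) := by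
          funext x
          rw [patch_congr (p' := fun _ => false) (fun v hv => ?_) x]
          rcases Finset.mem_insert.mp hv with h | h
          · subst h; rw [flipOne_self, hpi]; rfl
          · rw [Finset.mem_singleton.mp h, flipOne_other p₀ hij0.symm, hpj]
        have eB : (fun x => F (patch (flipOne p₀ j0) x ({i0, j0} : Finset V)))
            = (fun x => F (patch (fun _ => true) x ({i0, j0} : Finset V))) := by
          funext x
          rw [patch_congr (p' := fun _ => true) (fun v hv => ?_) x]
          rcases Finset.mem_insert.mp hv with h | h
          · subst h; rw [flipOne_other p₀ hij0, hpi]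
          · rw [Finset.mem_singleton.mp h, flipOne_self, hpj]; rfl
        rw [eA, eB] at hnd0
        rw [Finset.pair_comm j0 i0]
        exact fun h => hnd0 (lindep_symm h)
  obtain ⟨i, j, hij, hzero, hnd⟩ := main
  set A : (V → Bool) → ℝ := fun x => F (patch (fun _ => false) x ({i, j} : Finset V)) with hA
  set B : (V → Bool) → ℝ := fun x => F (patch (fun _ => true) x ({i, j} : Finset V)) with hB
  have hA0 : ∀ x, 0 ≤ A x := fun x => h0 _
  have hB0 : ∀ x, 0 ≤ B x := fun x => h0 _
  have hdepF : ∀ (q : V → Bool) (x y : V → Bool), (∀ u, u ≠ i → u ≠ j → x u = y u) →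
      F (patch q x ({i, j} : Finset V)) = F (patch q y ({i, j} : Finset V)) := by
    intro q x y h
    congr 1
    funext v
    by_cases hv : v ∈ ({i, j} : Finset V)
    · simp [patch, hv]
    · have hvi : v ≠ i := fun h' => hv (by simp [h'])
      have hvj : v ≠ j := fun h' => hv (by simp [h'])
      simp [patch, hv, h v hvi hvj]
  have hAdep : ∀ x y : V → Bool, (∀ u, u ≠ i → u ≠ j → x u = y u) → A x = A y := by
    intro x y h
    simp only [hA]
    exact hdepF _ x y h
  have hBdep : ∀ x y : V → Bool, (∀ u, u ≠ i → u ≠ j → x u = y u) → B x = B y := by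
    intro x y h
    simp only [hB]
    exact hdepF _ x y h
  -- Step 3: on each half-cube, A and B are linearly dependent
  have hhalf : ∀ v, v ≠ i → v ≠ j → ∀ b : Bool, ∃ lam mu : ℝ, (lam ≠ 0 ∨ mu ≠ 0) ∧
      ∀ x, x v = b → lam * B x = mu * A x := by
    intro v hvi hvj b
    set qb : V → Bool := fun u => if u = i then false else if u = j then true else b with hqb
    have hqbi : qb i = false := by simp [hqb]
    have hqbj : qb j = true := by simp [hqb, hij.symm]
    have hqbv : qb v = b := by simp [hqb, hvi, hvj]
    have hIM := hmin {v} ⟨v, Finset.mem_singleton_self v⟩ qb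
    have key := hIM {i, j} qb i j (by simp) (by simp) (by rw [hqbi, hqbj]; simp) ?_
    · obtain ⟨lam, mu, hlm, heq⟩ := key
      refine ⟨lam, mu, hlm, fun x hx => ?_⟩
      have h1 : patch qb (patch (flipOne qb i) x ({i, j} : Finset V)) ({v} : Finset V)
          = patch (fun _ => true) x ({i, j} : Finset V) := by
        funext u
        by_cases hui : u = i
        · simp [patch, hui, Ne.symm hvi, flipOne_self, hqbi]
        · by_cases huj : u = j
          · simp [patch, huj, Ne.symm hvj, flipOne_other qb (Ne.symm hij), hqbj]
          · by_cases huv : u = v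
            · simp [patch, huv, hvi, hvj, hqbv, hx]
            · simp [patch, hui, huj, huv]
      have h2 : patch qb (patch (flipOne qb j) x ({i, j} : Finset V)) ({v} : Finset V)
          = patch (fun _ => false) x ({i, j} : Finset V) := by
        funext u
        by_cases hui : u = i
        · simp [patch, hui, Ne.symm hvi, flipOne_other qb hij, hqbi]
        · by_cases huj : u = j
          · simp [patch, huj, Ne.symm hvj, flipOne_self, hqbj]
          · by_cases huv : u = v
            · simp [patch, huv, hvi, hvj, hqbv, hx]
            · simp [patch, hui, huj, huv]
      have h3 := heq x
      simp only [h1, h2] at h3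
      simp only [hA, hB]
      exact h3
    · intro x
      have h1 : patch qb (patch qb x ({i, j} : Finset V)) ({v} : Finset V)
          = patch (fun u => if u = j then true else false) (patch qb x ({v} : Finset V))
              ({i, j} : Finset V) := by
        funext u
        by_cases hui : u = i
        · simp [patch, hui, Ne.symm hvi, hqbi, hij]
        · by_cases huj : u = j
          · simp [patch, huj, Ne.symm hvj, hqbj]
          · by_cases huv : u = v
            · simp [patch, huv, hvi, hvj]
            · simp [patch, hui, huj, huv]
      show F (patch qb (patch qb x ({i, j} : Finset V)) ({v} : Finset V)) = 0
      rw [h1]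
      exact hzero _
  have tri : ∀ v, v ≠ i → v ≠ j → ∀ b : Bool,
      (∀ x, x v = b → A x = 0) ∨ (∀ x, x v = b → B x = 0) ∨
        (∃ r, 0 < r ∧ ∀ x, x v = b → A x = r * B x) := by
    intro v hvi hvj b
    obtain ⟨lam, mu, hlm, heq⟩ := hhalf v hvi hvj b
    exact tri_aux A B hA0 hB0 (fun x => x v = b) lam mu hlm heq
  -- Step 4: combined support lies in a complementary pair off {i,j}
  have hsupp : ∀ x y : V → Bool, (A x ≠ 0 ∨ B x ≠ 0) → (A y ≠ 0 ∨ B y ≠ 0) →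
      (∀ u, u ≠ i → u ≠ j → x u = y u) ∨ (∀ u, u ≠ i → u ≠ j → x u = !(y u)) := by
    intro x y hx hy
    by_contra hc
    push_neg at hc
    obtain ⟨h1, h2⟩ := hc
    obtain ⟨u, hui, huj, hu⟩ := h1
    obtain ⟨v, hvi, hvj, hv⟩ := h2
    have hv' : x v = y v := (bool_eq_or_eq_not (x v) (y v)).resolve_right hv
    have hu' : y u = !(x u) := by
      rcases bool_eq_or_eq_not (y u) (x u) with h | h
      · exact absurd h.symm hu
      · exact h
    apply hnd
    rcases tri v hvi hvj (x v) with hc1 | hc1 | ⟨r, hr, hc1⟩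
    · have hAx : A x = 0 := hc1 x rfl
      have hAy : A y = 0 := hc1 y hv'.symm
      have hBx : B x ≠ 0 := by
        rcases hx with h | h
        · exact absurd hAx h
        · exact h
      have hBy : B y ≠ 0 := by
        rcases hy with h | h
        · exact absurd hAy h
        · exact h
      have H2 : ∀ w : V → Bool, w u = x u → A w = 0 := by
        rcases tri u hui huj (x u) with h | h | ⟨r, hr, h⟩
        · exact h
        · exact absurd (h x rfl) hBx
        · exfalso
          have h' := h x rfl
          rw [hAx] at h'
          rcases mul_eq_zero.mp h'.symm with h'' | h''
          · exact (ne_of_gt hr) h''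
          · exact hBx h''
      have H3 : ∀ w : V → Bool, w u = !(x u) → A w = 0 := by
        rcases tri u hui huj (!(x u)) with h | h | ⟨r, hr, h⟩
        · exact h
        · exact absurd (h y hu') hBy
        · exfalso
          have h' := h y hu'
          rw [hAy] at h'
          rcases mul_eq_zero.mp h'.symm with h'' | h''
          · exact (ne_of_gt hr) h''
          · exact hBy h''
      refine ⟨0, 1, Or.inr one_ne_zero, fun w => ?_⟩
      have hw : A w = 0 := by
        rcases bool_eq_or_eq_not (w u) (x u) with h | h
        · exact H2 w h
        · exact H3 w h
      simp [hw]
    · have hBx : B x = 0 := hc1 x rfl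
      have hBy : B y = 0 := hc1 y hv'.symm
      have hAx : A x ≠ 0 := by
        rcases hx with h | h
        · exact h
        · exact absurd hBx h
      have hAy : A y ≠ 0 := by
        rcases hy with h | h
        · exact h
        · exact absurd hBy h
      have H2 : ∀ w : V → Bool, w u = x u → B w = 0 := by
        rcases tri u hui huj (x u) with h | h | ⟨r, hr, h⟩
        · exact absurd (h x rfl) hAx
        · exact h
        · intro w hw
          have h' := h x rfl
          rw [hBx, mul_zero] at h'
          exact absurd h' hAx
      have H3 : ∀ w : V → Bool, w u = !(x u) → B w = 0 := by
        rcases tri u hui huj (!(x u)) with h | h | ⟨r, hr, h⟩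
        · exact absurd (h y hu') hAy
        · exact h
        · intro w hw
          have h' := h y hu'
          rw [hBy, mul_zero] at h'
          exact absurd h' hAy
      refine ⟨1, 0, Or.inl one_ne_zero, fun w => ?_⟩
      have hw : B w = 0 := by
        rcases bool_eq_or_eq_not (w u) (x u) with h | h
        · exact H2 w h
        · exact H3 w h
      simp [hw]
    · have hABx := hc1 x rfl
      have hABy := hc1 y hv'.symm
      have hBx : B x ≠ 0 := by
        intro h
        rw [h, mul_zero] at hABx
        rcases hx with h' | h'
        · exact h' hABx
        · exact h' h
      have hAx : A x ≠ 0 := by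
        rw [hABx]
        exact mul_ne_zero (ne_of_gt hr) hBx
      have hBy : B y ≠ 0 := by
        intro h
        rw [h, mul_zero] at hABy
        rcases hy with h' | h'
        · exact h' hABy
        · exact h' h
      have hAy : A y ≠ 0 := by
        rw [hABy]
        exact mul_ne_zero (ne_of_gt hr) hBy
      have H2 : ∀ w : V → Bool, w u = x u → A w = r * B w := by
        rcases tri u hui huj (x u) with h | h | ⟨r', hr', h⟩
        · exact absurd (h x rfl) hAx
        · exact absurd (h x rfl) hBx
        · have hrr : r' = r := by
            have h' : r' * B x = r * B x := by rw [← h x rfl, hABx]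
            exact mul_right_cancel₀ hBx h'
          intro w hw
          rw [h w hw, hrr]
      have H3 : ∀ w : V → Bool, w u = !(x u) → A w = r * B w := by
        rcases tri u hui huj (!(x u)) with h | h | ⟨r', hr', h⟩
        · exact absurd (h y hu') hAy
        · exact absurd (h y hu') hBy
        · have hrr : r' = r := by
            have h' : r' * B y = r * B y := by rw [← h y hu', hABy]
            exact mul_right_cancel₀ hBy h'
          intro w hw
          rw [h w hw, hrr]
      refine ⟨r, 1, Or.inr one_ne_zero, fun w => ?_⟩
      have hw : A w = r * B w := by
        rcases bool_eq_or_eq_not (w u) (x u) with h | h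
        · exact H2 w h
        · exact H3 w h
      rw [hw]; ring
  -- Step 5: the support pattern z
  obtain ⟨z, hAz⟩ : ∃ z : V → Bool, A z ≠ 0 := by
    by_contra h
    push_neg at h
    exact hnd ⟨0, 1, Or.inr one_ne_zero, fun x => by simp [h x]⟩
  set zneg : V → Bool := fun v => !(z v) with hzneg
  have hchar : ∀ x : V → Bool, (A x ≠ 0 ∨ B x ≠ 0) →
      (∀ u, u ≠ i → u ≠ j → x u = z u) ∨ (∀ u, u ≠ i → u ≠ j → x u = !(z u)) :=
    fun x hx => hsupp x z hx (Or.inl hAz)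
  have hdet : A z * B zneg ≠ A zneg * B z := by
    intro hdd
    apply hnd
    refine ⟨A z, B z, Or.inl hAz, fun x => ?_⟩
    by_cases hx : A x ≠ 0 ∨ B x ≠ 0
    · rcases hchar x hx with h | h
      · rw [hAdep x z h, hBdep x z h]; ring
      · have h' : ∀ u, u ≠ i → u ≠ j → x u = zneg u := fun u h1 h2 => by
          rw [h u h1 h2, hzneg]
        rw [hAdep x zneg h', hBdep x zneg h']
        linarith [hdd]
    · push_neg at hx
      rw [hx.1, hx.2]; ring
  obtain ⟨t, hti, htj⟩ : ∃ t : V, t ≠ i ∧ t ≠ j := by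
    by_contra h
    push_neg at h
    apply hnd
    refine ⟨A z, B z, Or.inl hAz, fun x => ?_⟩
    have hx : ∀ u, u ≠ i → u ≠ j → x u = z u := fun u h1 h2 => absurd (h u h1) h2
    rw [hAdep x z hx, hBdep x z hx]; ring
  -- Step 6: cardinality and the equivalence
  have hc3 : 3 ≤ Fintype.card V := by
    have h1 : ({i, j, t} : Finset V).card = 3 := by
      rw [Finset.card_insert_of_notMem (by simp [hij, Ne.symm hti]),
          Finset.card_insert_of_notMem (by simp [Ne.symm htj]), Finset.card_singleton]
    calc 3 = ({i, j, t} : Finset V).card := h1.symm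
    _ ≤ Fintype.card V := Finset.card_le_univ _
  obtain ⟨k, hk⟩ : ∃ k, Fintype.card V = k + 3 := ⟨Fintype.card V - 3, by omega⟩
  have h01 : (0 : Fin (k + 3)) ≠ 1 := by simp [Fin.ext_iff]
  have h02 : (0 : Fin (k + 3)) ≠ 2 := by simp [Fin.ext_iff, Nat.mod_eq_of_lt (show 2 < k + 3 by omega)]
  have h12 : (1 : Fin (k + 3)) ≠ 2 := by simp [Fin.ext_iff, Nat.mod_eq_of_lt (show 2 < k + 3 by omega)]
  have hE : ∃ e : Fin (k + 3) ≃ V, e 0 = i ∧ e 1 = j ∧ e 2 = t := by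
    obtain ⟨e₀⟩ : Nonempty (Fin (k + 3) ≃ V) := ⟨(Fintype.equivFinOfCardEq hk).symm⟩
    set a := e₀.symm i with ha
    set b := e₀.symm j with hb
    set cc := e₀.symm t with hcc
    have hab : a ≠ b := fun h => hij (e₀.symm.injective h)
    have hac : a ≠ cc := fun h => hti (e₀.symm.injective h).symm
    have hbc : b ≠ cc := fun h => htj (e₀.symm.injective h).symm
    set π₁ := Equiv.swap (0 : Fin (k + 3)) a with hπ1
    set b1 := π₁.symm b with hb1
    have hb10 : b1 ≠ 0 := by
      intro h
      have h' : π₁ b1 = b := by rw [hb1, Equiv.apply_symm_apply]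
      rw [h, hπ1, Equiv.swap_apply_left] at h'
      exact hab h'
    set π₂ := Equiv.swap (1 : Fin (k + 3)) b1 with hπ2
    set c2 := π₂.symm (π₁.symm cc) with hc2
    have hπ20 : π₂ 0 = 0 := by
      rw [hπ2]
      exact Equiv.swap_apply_of_ne_of_ne h01 (Ne.symm hb10)
    have hc20 : c2 ≠ 0 := by
      intro h
      have h' : π₁ (π₂ c2) = cc := by rw [hc2, Equiv.apply_symm_apply, Equiv.apply_symm_apply]
      rw [h, hπ20, hπ1, Equiv.swap_apply_left] at h'
      exact hac h'
    have hc21 : c2 ≠ 1 := by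
      intro h
      have h' : π₁ (π₂ c2) = cc := by rw [hc2, Equiv.apply_symm_apply, Equiv.apply_symm_apply]
      rw [h, hπ2, Equiv.swap_apply_left, hb1, Equiv.apply_symm_apply] at h'
      exact hbc h'
    set π₃ := Equiv.swap (2 : Fin (k + 3)) c2 with hπ3
    refine ⟨π₃.trans (π₂.trans (π₁.trans e₀)), ?_, ?_, ?_⟩
    · simp only [Equiv.trans_apply]
      rw [hπ3, Equiv.swap_apply_of_ne_of_ne h02 (Ne.symm hc20), hπ20, hπ1,
          Equiv.swap_apply_left, ha, Equiv.apply_symm_apply]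
    · simp only [Equiv.trans_apply]
      rw [hπ3, Equiv.swap_apply_of_ne_of_ne h12 (Ne.symm hc21), hπ2,
          Equiv.swap_apply_left, hb1, Equiv.apply_symm_apply, hb, Equiv.apply_symm_apply]
    · simp only [Equiv.trans_apply]
      rw [hπ3, Equiv.swap_apply_left, hc2, Equiv.apply_symm_apply, Equiv.apply_symm_apply,
          hcc, Equiv.apply_symm_apply]
  obtain ⟨e, he0, he1, he2⟩ := hE
  have hsymi : e.symm i = 0 := by rw [← he0, Equiv.symm_apply_apply]
  have hsymj : e.symm j = 1 := by rw [← he1, Equiv.symm_apply_apply]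
  have hsymt : e.symm t = 2 := by rw [← he2, Equiv.symm_apply_apply]
  have hoff : ∀ m : Fin (k + 3), 2 ≤ (m : ℕ) → e m ≠ i ∧ e m ≠ j := by
    intro m hm
    constructor
    · intro h
      have hm0 : m = 0 := by rw [← hsymi, ← h, Equiv.symm_apply_apply]
      rw [hm0] at hm
      have hv0 : ((0 : Fin (k + 3)) : ℕ) = 0 := rfl
      omega
    · intro h
      have hm1 : m = 1 := by rw [← hsymj, ← h, Equiv.symm_apply_apply]
      rw [hm1] at hm
      have hv1 : ((1 : Fin (k + 3)) : ℕ) = 1 := rfl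
      omega
  have hoff' : ∀ v, v ≠ i → v ≠ j → 2 ≤ ((e.symm v : Fin (k + 3)) : ℕ) := by
    intro v hvi hvj
    by_contra h
    push_neg at h
    rcases (by omega : ((e.symm v : Fin (k + 3)) : ℕ) = 0 ∨ ((e.symm v : Fin (k + 3)) : ℕ) = 1)
      with h' | h'
    · have hh : e.symm v = 0 := Fin.ext h'
      have hv : v = i := by
        have := congrArg e hh
        rwa [Equiv.apply_symm_apply, he0] at this
      exact hvi hv
    · have hh : e.symm v = 1 := Fin.ext h'
      have hv : v = j := by
        have := congrArg e hh
        rwa [Equiv.apply_symm_apply, he1] at this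
      exact hvj hv
  refine ⟨k, e, fun m => z (e m),
    fun s c => (if c then B else A) (if s = z t then z else zneg), ?_, ?_, ?_⟩
  · -- non-degeneracy
    cases hzt : z t
    · intro h
      have h' : A z * B zneg = B z * A zneg := by simpa [hzt] using h
      exact hdet (by linarith [h'])
    · intro h
      have h' : A zneg * B z = B zneg * A z := by simpa [hzt] using h
      exact hdet (by linarith [h'])
  · -- zero row
    intro y hy0 hy1
    have hxy : (fun v => y (e.symm v))
        = patch (fun u => if u = j then true else false) (fun v => y (e.symm v))
            ({i, j} : Finset V) := by
      funext v
      by_cases hvi : v = i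
      · subst hvi
        simp [patch, hsymi, hy0, hij]
      · by_cases hvj : v = j
        · subst hvj
          simp [patch, hsymj, hy1]
        · simp [patch, hvi, hvj]
    rw [hxy]
    exact hzero _
  · -- diagonal structure
    intro c y hy0 hy1
    have hxyi : y (e.symm i) = c := by rw [hsymi, hy0]
    have hxyj : y (e.symm j) = c := by rw [hsymj, hy1]
    have hxyt : y (e.symm t) = y 2 := by rw [hsymt]
    have hF : F (fun v => y (e.symm v)) = (if c then B else A) (fun v => y (e.symm v)) := by
      cases c
      · have hp : patch (fun _ => false) (fun v => y (e.symm v)) ({i, j} : Finset V)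
            = (fun v => y (e.symm v)) := by
          funext v
          by_cases hvi : v = i
          · subst hvi; simp [patch, hxyi]
          · by_cases hvj : v = j
            · subst hvj; simp [patch, hxyj]
            · simp [patch, hvi, hvj]
        simp only [Bool.false_eq_true, if_false, hA]
        rw [hp]
      · have hp : patch (fun _ => true) (fun v => y (e.symm v)) ({i, j} : Finset V)
            = (fun v => y (e.symm v)) := by
          funext v
          by_cases hvi : v = i
          · subst hvi; simp [patch, hxyi]
          · by_cases hvj : v = j
            · subst hvj; simp [patch, hxyj]
            · simp [patch, hvi, hvj]
        simp only [if_true, hB]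
        rw [hp]
    split_ifs with hcond
    · show F (fun v => y (e.symm v)) = (if c then B else A) (if y 2 = z t then z else zneg)
      rcases hcond with hP | hQ
      · have hoffxy : ∀ u, u ≠ i → u ≠ j → y (e.symm u) = z u := by
          intro u hui huj
          have h2 := hP (e.symm u) (hoff' u hui huj)
          simpa [Equiv.apply_symm_apply] using h2
        have hy2 : y 2 = z t := by rw [← hxyt]; exact hoffxy t hti htj
        rw [hF, hy2, if_pos rfl]
        cases c
        · simp only [Bool.false_eq_true, if_false]
          exact hAdep _ z hoffxy
        · simp only [if_true]
          exact hBdep _ z hoffxy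
      · have hoffxy : ∀ u, u ≠ i → u ≠ j → y (e.symm u) = !(z u) := by
          intro u hui huj
          have h2 := hQ (e.symm u) (hoff' u hui huj)
          simpa [Equiv.apply_symm_apply] using h2
        have hy2 : y 2 = !(z t) := by rw [← hxyt]; exact hoffxy t hti htj
        have hnezt : (!(z t)) ≠ z t := by cases z t <;> simp
        rw [hF, hy2, if_neg hnezt]
        have hoffxy' : ∀ u, u ≠ i → u ≠ j → y (e.symm u) = zneg u := by
          intro u hui huj
          rw [hoffxy u hui huj, hzneg]
        cases c
        · simp only [Bool.false_eq_true, if_false]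
          exact hAdep _ zneg hoffxy'
        · simp only [if_true]
          exact hBdep _ zneg hoffxy'
    · have hxz : A (fun v => y (e.symm v)) = 0 ∧ B (fun v => y (e.symm v)) = 0 := by
        by_contra h
        rw [not_and_or] at h
        have hx : A (fun v => y (e.symm v)) ≠ 0 ∨ B (fun v => y (e.symm v)) ≠ 0 := h
        rcases hchar _ hx with h' | h'
        · refine hcond (Or.inl fun m hm => ?_)
          have h1 := h' (e m) (hoff m hm).1 (hoff m hm).2
          rwa [Equiv.symm_apply_apply] at h1
        · refine hcond (Or.inr fun m hm => ?_)
          have h1 := h' (e m) (hoff m hm).1 (hoff m hm).2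
          rwa [Equiv.symm_apply_apply] at h1
      rw [hF]
      cases c
      · simp only [Bool.false_eq_true, if_false]
        exact hxz.1
      · simp only [if_true]
        exact hxz.2
end

section
/- Let T be a 2×2 matrix with nonnegative real entries and nonzero determinant, let a,b ≥ 1 be integers, and let M₂ be a 2×2 matrix with nonnegative entries and negative determinant (i.e., M₂(0,0)M₂(1,1) < M₂(0,1)M₂(1,0)). Let M₁ be the matrix with entries M₁(i,j) = T(i,j)^a and M₃ the matrix with entries M₃(i,j) = T(j,i)^b. Then the product M₁M₂M₃ has negative determinant. In particular, if H: {0,1}^V → ℝ≥0 is non-logsupermodular with supp(H) ⊆ {0, x, x̄, 1}, then the transformed signature T^⊗H^B (for B ∈ {1,2}) is non-logsupermodular. -/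
/-- Determinant of a 2×2 matrix indexed by `Bool`. -/
def det2 (M : Bool → Bool → ℝ) : ℝ := M false false * M true true - M false true * M true false

/-- Product of 2×2 matrices indexed by `Bool`. -/
def mul2 (M N : Bool → Bool → ℝ) : Bool → Bool → ℝ :=
  fun i k => M i false * N false k + M i true * N true k

lemma det2_mul2 (M N : Bool → Bool → ℝ) : det2 (mul2 M N) = det2 M * det2 N := by
  simp only [det2, mul2]; ring

lemma key1 (T : Bool → Bool → ℝ) (a b : ℕ) (hT : ∀ i j, 0 ≤ T i j) (hdet : det2 T ≠ 0)
    (ha : 1 ≤ a) (hb : 1 ≤ b) (M₂ : Bool → Bool → ℝ)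
    (hM2 : ∀ i j, 0 ≤ M₂ i j) (hM2det : det2 M₂ < 0) :
    det2 (mul2 (mul2 (fun i j => T i j ^ a) M₂) (fun i j => T j i ^ b)) < 0 := by
  rw [det2_mul2, det2_mul2]
  set p := T false false * T true true with hp
  set q := T false true * T true false with hq
  have h1 : det2 (fun i j => T i j ^ a) = p ^ a - q ^ a := by
    simp only [det2, hp, hq, mul_pow]
  have h3 : det2 (fun i j => T j i ^ b) = p ^ b - q ^ b := by
    simp only [det2, hp, hq, mul_pow]; ring
  rw [h1, h3]
  have hpq : p ≠ q := by
    simp only [det2, ← hp, ← hq] at hdet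
    exact sub_ne_zero.mp hdet
  have hp0 : 0 ≤ p := mul_nonneg (hT _ _) (hT _ _)
  have hq0 : 0 ≤ q := mul_nonneg (hT _ _) (hT _ _)
  have hpos : 0 < (p ^ a - q ^ a) * (p ^ b - q ^ b) := by
    rcases lt_or_gt_of_ne hpq with h | h
    · have h1 := pow_lt_pow_left₀ h hp0 (by omega : a ≠ 0)
      have h2 := pow_lt_pow_left₀ h hp0 (by omega : b ≠ 0)
      exact mul_pos_of_neg_of_neg (by linarith) (by linarith)
    · have h1 := pow_lt_pow_left₀ h hq0 (by omega : a ≠ 0)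
      have h2 := pow_lt_pow_left₀ h hq0 (by omega : b ≠ 0)
      exact mul_pos (by linarith) (by linarith)
  calc (p^a - q^a) * det2 M₂ * (p^b - q^b) = ((p^a - q^a)*(p^b - q^b)) * det2 M₂ := by ring
    _ < 0 := mul_neg_of_pos_of_neg hpos hM2det



/-- If `M₂` has nonnegative entries and negative determinant, and `T` is a nonnegative
2×2 matrix with nonzero determinant, then `M₁M₂M₃` has negative determinant, where
`M₁(i,j) = T(i,j)^a` and `M₃(i,j) = T(j,i)^b` (`a,b ≥ 1`).  In particular, the
holographic transform `T^⊗H^B` of a non-logsupermodular signature `H` with support in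
`{0, x, x̄, 1}` (with `x` neither all-zero nor all-one) is non-logsupermodular. -/
theorem neg_det_product (T M₂ : Bool → Bool → ℝ) (a b : ℕ)
    (hT : ∀ i j, 0 ≤ T i j) (hdet : det2 T ≠ 0)
    (ha : 1 ≤ a) (hb : 1 ≤ b)
    (hM2 : ∀ i j, 0 ≤ M₂ i j) (hM2det : det2 M₂ < 0) :
    det2 (mul2 (mul2 (fun i j => T i j ^ a) M₂) (fun i j => T j i ^ b)) < 0 ∧
    ∀ (V : Type) [Fintype V] [DecidableEq V] (H : (V → Bool) → ℝ) (x : V → Bool) (B : ℕ),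
      (∀ y, 0 ≤ H y) → ¬ LogSupermodular H →
      {y | H y ≠ 0} ⊆ {(fun _ => false), x, (fun v => !x v), (fun _ => true)} →
      x ≠ (fun _ => false) → x ≠ (fun _ => true) → (B = 1 ∨ B = 2) →
      ¬ LogSupermodular
          (fun xx => ∑ y : V → Bool, (∏ v : V, T (xx v) (y v)) * (H y) ^ B) := by
  refine ⟨key1 T a b hT hdet ha hb M₂ hM2 hM2det, ?_⟩
  intro V _ _ H x B hH hns hsupp hx0 hx1 hB hLS
  classical
  have hBne : B ≠ 0 := by omega
  -- extract a violation of logsupermodularity for H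
  simp only [LogSupermodular, not_forall, not_le] at hns
  obtain ⟨y, z, hlt⟩ := hns
  have hy0 : H y ≠ 0 := by
    intro h; rw [h] at hlt
    have := mul_nonneg (hH (fun v => y v && z v)) (hH (fun v => y v || z v))
    simp at hlt; linarith
  have hz0 : H z ≠ 0 := by
    intro h; rw [h] at hlt
    have := mul_nonneg (hH (fun v => y v && z v)) (hH (fun v => y v || z v))
    simp at hlt; linarith
  have hy := hsupp hy0
  have hz := hsupp hz0
  simp only [Set.mem_insert_iff, Set.mem_singleton_iff] at hy hz
  have key : H (fun _ => false) * H (fun _ => true) < H x * H (fun v => !x v) := by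
    rcases hy with rfl | rfl | rfl | rfl <;> rcases hz with rfl | rfl | rfl | rfl <;>
      simp only [Bool.false_and, Bool.and_false, Bool.true_and, Bool.and_true,
        Bool.false_or, Bool.or_false, Bool.true_or, Bool.or_true,
        Bool.and_self, Bool.or_self, Bool.and_not_self, Bool.not_and_self,
        Bool.or_not_self, Bool.not_or_self] at hlt <;>
      linarith
  -- witnesses that x is not constant
  have hv0 : ∃ v, x v = false := by
    by_contra h; push_neg at h; apply hx1; funext v; simpa using h v
  have hv1 : ∃ v, x v = true := by
    by_contra h; push_neg at h; apply hx0; funext v; simpa using h v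
  obtain ⟨v₀, h0⟩ := hv0
  obtain ⟨v₁, h1⟩ := hv1
  set a' := (Finset.univ.filter (fun v : V => ¬ x v = true)).card with ha'
  set b' := (Finset.univ.filter (fun v : V => x v = true)).card with hb'
  have ha1 : 1 ≤ a' := Finset.card_pos.mpr ⟨v₀, by simp [h0]⟩
  have hb1 : 1 ≤ b' := Finset.card_pos.mpr ⟨v₁, by simp [h1]⟩
  set cfg : Bool → Bool → (V → Bool) := fun i j v => if x v then j else i with hcfg
  have hc00 : cfg false false = (fun _ => false) := by
    funext v; simp [hcfg]
  have hc01 : cfg false true = x := by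
    funext v; cases hxv : x v <;> simp [hcfg, hxv]
  have hc10 : cfg true false = (fun v => !x v) := by
    funext v; cases hxv : x v <;> simp [hcfg, hxv]
  have hc11 : cfg true true = (fun _ => true) := by
    funext v; simp [hcfg]
  set F := (fun xx : V → Bool => ∑ y : V → Bool, (∏ v : V, T (xx v) (y v)) * H y ^ B)
    with hFdef
  have hprod : ∀ i j k l : Bool,
      (∏ v : V, T (cfg i j v) (cfg k l v)) = T i k ^ a' * T j l ^ b' := by
    intro i j k l
    have step : ∀ v : V, T (cfg i j v) (cfg k l v) = if x v = true then T j l else T i k := by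
      intro v; by_cases h : x v = true <;> simp [hcfg, h]
    rw [Finset.prod_congr rfl (fun v _ => step v), Finset.prod_ite,
      Finset.prod_const, Finset.prod_const, mul_comm]
  have himg : ∀ w : V → Bool, H w ≠ 0 →
      w ∈ Finset.univ.image (fun p : Bool × Bool => cfg p.1 p.2) := by
    intro w hw
    have := hsupp hw
    simp only [Set.mem_insert_iff, Set.mem_singleton_iff] at this
    rcases this with rfl | rfl | rfl | rfl
    · exact Finset.mem_image.mpr ⟨(false, false), Finset.mem_univ _, hc00⟩
    · exact Finset.mem_image.mpr ⟨(false, true), Finset.mem_univ _, hc01⟩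
    · exact Finset.mem_image.mpr ⟨(true, false), Finset.mem_univ _, hc10⟩
    · exact Finset.mem_image.mpr ⟨(true, true), Finset.mem_univ _, hc11⟩
  have hinj : ∀ p ∈ (Finset.univ : Finset (Bool × Bool)), ∀ q ∈ (Finset.univ : Finset (Bool × Bool)),
      cfg p.1 p.2 = cfg q.1 q.2 → p = q := by
    intro p _ q _ h
    have e0 := congrFun h v₀
    have e1 := congrFun h v₁
    simp only [hcfg, h0, h1, if_neg, if_pos, Bool.false_eq_true, if_false, if_true] at e0 e1
    exact Prod.ext e0 e1
  have hFN : ∀ i j : Bool, F (cfg i j) =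
      mul2 (mul2 (fun i k => T i k ^ a') (fun k l => H (cfg k l) ^ B))
        (fun l j => T j l ^ b') i j := by
    intro i j
    have hzero : ∀ w ∈ (Finset.univ : Finset (V → Bool)),
        w ∉ Finset.univ.image (fun p : Bool × Bool => cfg p.1 p.2) →
        (∏ v : V, T (cfg i j v) (w v)) * H w ^ B = 0 := by
      intro w _ hw
      have : H w = 0 := by by_contra h; exact hw (himg w h)
      rw [this, zero_pow hBne, mul_zero]
    calc F (cfg i j)
        = ∑ w ∈ Finset.univ.image (fun p : Bool × Bool => cfg p.1 p.2),
            (∏ v : V, T (cfg i j v) (w v)) * H w ^ B :=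
          (Finset.sum_subset (Finset.subset_univ _) hzero).symm
      _ = ∑ p : Bool × Bool, (∏ v : V, T (cfg i j v) (cfg p.1 p.2 v)) * H (cfg p.1 p.2) ^ B :=
          Finset.sum_image hinj
      _ = ∑ p : Bool × Bool, (T i p.1 ^ a' * T j p.2 ^ b') * H (cfg p.1 p.2) ^ B := by
          refine Finset.sum_congr rfl fun p _ => ?_; rw [hprod]
      _ = _ := by
          simp only [Fintype.sum_prod_type, Fintype.sum_bool, mul2]; ring
  have hdetM2 : det2 (fun k l => H (cfg k l) ^ B) < 0 := by
    simp only [det2, hc00, hc01, hc10, hc11]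
    rw [← mul_pow, ← mul_pow]
    have := pow_lt_pow_left₀ key (mul_nonneg (hH _) (hH _)) hBne
    linarith
  have hdetlt := key1 T a' b' hT hdet ha1 hb1 (fun k l => H (cfg k l) ^ B)
    (fun k l => pow_nonneg (hH _) B) hdetM2
  have final : F (cfg false false) * F (cfg true true)
      - F (cfg false true) * F (cfg true false) < 0 := by
    rw [hFN, hFN, hFN, hFN]
    simpa [det2] using hdetlt
  rw [hc00, hc01, hc10, hc11] at final
  have hLS' := hLS x (fun v => !x v)
  simp only [Bool.and_not_self, Bool.or_not_self] at hLS'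
  have hFx : 0 ≤ F x * F (fun v => !x v) := by
    apply mul_nonneg <;>
    · rw [hFdef]
      exact Finset.sum_nonneg fun w _ =>
        mul_nonneg (Finset.prod_nonneg fun v _ => hT _ _) (pow_nonneg (hH _) B)
  linarith
end

section
/- Every indecomposable relation in NEQ-conj has cardinality at most 2; specifically, if R ⊆ {0,1}^V is indecomposable and is a conjunction of equalities, disequalities, and pins, then R ⊆ {x, x̄} for some x ∈ {0,1}^V. Conversely, every relation of cardinality at most two is in NEQ-conj. -/
open Finset

variable {V : Type} [Fintype V] [DecidableEq V] [Nonempty V]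

def Decomposable (R : Set (V → Bool)) : Prop :=
  ∃ V1 : Finset V, V1.Nonempty ∧ V1 ≠ univ ∧
    ∃ S1 S2 : Set (V → Bool), ∀ x, x ∈ R ↔
      ((∃ y ∈ S1, ∀ v ∈ V1, y v = x v) ∧ (∃ y ∈ S2, ∀ v ∉ V1, y v = x v))

/-- NEQ-conj: relations cut out by equalities, disequalities and pins. -/
def InNEQconj (R : Set (V → Bool)) : Prop :=
  ∃ (E N : Set (V × V)) (P : Set (V × Bool)),
    R = {x | (∀ p ∈ E, x p.1 = x p.2) ∧ (∀ p ∈ N, x p.1 ≠ x p.2) ∧ (∀ p ∈ P, x p.1 = p.2)}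

lemma bool_aux : ∀ w x y z : Bool, w ≠ x → y ≠ z → (w = y ↔ x = z) := by decide

lemma bool_aux2 : ∀ a b x : Bool, x ≠ !a → a ≠ b → x = a := by decide

/-- Every indecomposable NEQ-conj relation is contained in a configuration together
with its complement (so has cardinality at most two); conversely every relation of
cardinality at most two is in NEQ-conj. -/
theorem indecomposable_NEQconj_card :
    (∀ R : Set (V → Bool), ¬ Decomposable R → InNEQconj R →
      ∃ x : V → Bool, R ⊆ {x, fun v => !x v}) ∧
    (∀ R : Set (V → Bool), R.ncard ≤ 2 → InNEQconj R) := by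
  constructor
  · intro R hdec hR
    by_cases hR0 : R = ∅
    · exact ⟨fun _ => true, by simp [hR0]⟩
    obtain ⟨a, ha⟩ := Set.nonempty_iff_ne_empty.mpr hR0
    refine ⟨a, fun b hb => ?_⟩
    by_contra hbmem
    simp only [Set.mem_insert_iff, Set.mem_singleton_iff, not_or] at hbmem
    obtain ⟨hba, hba'⟩ := hbmem
    apply hdec
    obtain ⟨E, N, P, hRdef⟩ := hR
    refine ⟨Finset.univ.filter (fun v => a v = b v), ?_, ?_, R, R, ?_⟩
    · -- nonempty: b ≠ ā
      have : ∃ v, b v ≠ !(a v) := by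
        by_contra h
        push_neg at h
        exact hba' (funext h)
      obtain ⟨v, hv⟩ := this
      exact ⟨v, by
        simp only [Finset.mem_filter, Finset.mem_univ, true_and]
        revert hv; cases a v <;> cases b v <;> decide⟩
    · -- not univ: b ≠ a
      have : ∃ v, a v ≠ b v := by
        by_contra h
        push_neg at h
        exact hba (funext fun v => (h v).symm)
      obtain ⟨v, hv⟩ := this
      intro h
      have : v ∈ Finset.univ.filter (fun v => a v = b v) := by
        rw [h]; exact Finset.mem_univ v
      simp only [Finset.mem_filter, Finset.mem_univ, true_and] at this
      exact hv this
    · intro x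
      constructor
      · intro hx
        exact ⟨⟨x, hx, fun _ _ => rfl⟩, ⟨x, hx, fun _ _ => rfl⟩⟩
      · rintro ⟨⟨y, hy, hy'⟩, ⟨z, hz, hz'⟩⟩
        rw [hRdef] at ha hb hy hz ⊢
        simp only [Set.mem_setOf_eq] at ha hb hy hz ⊢
        simp only [Finset.mem_filter, Finset.mem_univ, true_and] at hy' hz'
        -- cross lemma
        have hcrossE : ∀ p ∈ E, (a p.1 = b p.1 ↔ a p.2 = b p.2) := by
          intro p hp
          rw [ha.1 p hp, hb.1 p hp]
        have hcrossN : ∀ p ∈ N, (a p.1 = b p.1 ↔ a p.2 = b p.2) := by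
          intro p hp
          exact bool_aux _ _ _ _ (ha.2.1 p hp) (hb.2.1 p hp)
        refine ⟨?_, ?_, ?_⟩
        · intro p hp
          by_cases h1 : a p.1 = b p.1
          · rw [← hy' p.1 h1, ← hy' p.2 ((hcrossE p hp).mp h1)]
            exact hy.1 p hp
          · rw [← hz' p.1 h1, ← hz' p.2 (fun h => h1 ((hcrossE p hp).mpr h))]
            exact hz.1 p hp
        · intro p hp
          by_cases h1 : a p.1 = b p.1
          · rw [← hy' p.1 h1, ← hy' p.2 ((hcrossN p hp).mp h1)]
            exact hy.2.1 p hp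
          · rw [← hz' p.1 h1, ← hz' p.2 (fun h => h1 ((hcrossN p hp).mpr h))]
            exact hz.2.1 p hp
        · intro p hp
          by_cases h1 : a p.1 = b p.1
          · rw [← hy' p.1 h1]; exact hy.2.2 p hp
          · rw [← hz' p.1 h1]; exact hz.2.2 p hp
  · intro R hcard
    rcases eq_or_ne R ∅ with h0 | h0
    · -- empty
      obtain ⟨v⟩ := (inferInstance : Nonempty V)
      refine ⟨∅, {(v, v)}, ∅, ?_⟩
      rw [h0]
      ext x
      simp
    · have hne : R.Nonempty := Set.nonempty_iff_ne_empty.mpr h0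
      have hfin : R.Finite := Set.toFinite R
      have h1 : R.ncard = 1 ∨ R.ncard = 2 := by
        have := (Set.ncard_pos hfin).mpr hne
        omega
      rcases h1 with h1 | h1
      · obtain ⟨a, ha⟩ := Set.ncard_eq_one.mp h1
        refine ⟨∅, ∅, {p | p.2 = a p.1}, ?_⟩
        rw [ha]
        ext x
        simp only [Set.mem_singleton_iff, Set.mem_setOf_eq, Set.mem_empty_iff_false,
          false_implies, implies_true, true_and]
        constructor
        · rintro rfl
          intro p hp
          exact hp.symm
        · intro h
          funext v
          exact h (v, a v) rfl
      · obtain ⟨a, b, hab, hR2⟩ := Set.ncard_eq_two.mp h1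
        refine ⟨{p | a p.1 ≠ b p.1 ∧ a p.2 ≠ b p.2 ∧ a p.1 = a p.2},
                {p | a p.1 ≠ b p.1 ∧ a p.2 ≠ b p.2 ∧ a p.1 ≠ a p.2},
                {p | a p.1 = b p.1 ∧ p.2 = a p.1}, ?_⟩
        have hd : ∃ d, a d ≠ b d := by
          by_contra h
          push_neg at h
          exact hab (funext h)
        obtain ⟨d, hd⟩ := hd
        rw [hR2]
        ext x
        simp only [Set.mem_insert_iff, Set.mem_singleton_iff, Set.mem_setOf_eq]
        constructor
        · rintro (rfl | rfl)
          · refine ⟨?_, ?_, ?_⟩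
            · rintro p ⟨-, -, h⟩; exact h
            · rintro p ⟨-, -, h⟩; exact h
            · rintro p ⟨-, h⟩; exact h.symm
          · refine ⟨?_, ?_, ?_⟩
            · rintro p ⟨h1, h2, h3⟩
              revert h1 h2 h3
              cases a p.1 <;> cases a p.2 <;> cases x p.1 <;> cases x p.2 <;> decide
            · rintro p ⟨h1, h2, h3⟩
              revert h1 h2 h3
              cases a p.1 <;> cases a p.2 <;> cases x p.1 <;> cases x p.2 <;> decide
            · rintro p ⟨h1, h2⟩
              rw [h2, ← h1]
        · rintro ⟨hE, hN, hP⟩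
          by_cases hxd : x d = a d
          · left
            funext v
            by_cases hv : a v = b v
            · exact hP (v, a v) ⟨hv, rfl⟩
            · by_cases hdv : a d = a v
              · rw [hE (d, v) ⟨hd, hv, hdv⟩] at hxd
                rw [hxd, hdv]
              · have := hN (d, v) ⟨hd, hv, hdv⟩
                simp only at this
                rw [hxd] at this
                revert this hdv
                cases a d <;> cases a v <;> cases x v <;> decide
          · right
            have hxd' : x d = b d := by
              revert hxd hd; cases a d <;> cases b d <;> cases x d <;> decide
            funext v
            by_cases hv : a v = b v
            · rw [hP (v, a v) ⟨hv, rfl⟩, hv]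
            · by_cases hdv : a d = a v
              · have h1 := hE (d, v) ⟨hd, hv, hdv⟩
                simp only at h1
                rw [hxd'] at h1
                -- x v = b d, need x v = b v; b d = !a d = !a v = b v
                revert h1 hd hv hdv
                cases a d <;> cases a v <;> cases b d <;> cases b v <;> cases x v <;> decide
              · have h1 := hN (d, v) ⟨hd, hv, hdv⟩
                simp only at h1
                rw [hxd'] at h1
                revert h1 hd hv hdv
                cases a d <;> cases a v <;> cases b d <;> cases b v <;> cases x v <;> decide
end

section
/- For all x,y ≥ 0, tanh(x+y) ≤ tanh(x) + tanh(y); moreover, for an arity-2 positive function G define J(G) = (1/4)·log(G(0,0)G(1,1)/(G(0,1)G(1,0))); then for any finite family of positive arity-2 functions F_i with pointwise product W, J(W) = ∑_i J(F_i), and |√(W(0,0)W(1,1)) − √(W(0,1)W(1,0))| / (√(W(0,0)W(1,1)) + √(W(0,1)W(1,0))) = tanh|J(W)| ≤ ∑_i tanh|J(F_i)|. -/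
open Real

lemma tanh_exp_eq (x : ℝ) : Real.tanh x = (Real.exp x - Real.exp (-x)) / (Real.exp x + Real.exp (-x)) := by
  rw [Real.tanh_eq_sinh_div_cosh, Real.sinh_eq, Real.cosh_eq]
  field_simp

lemma tanh_ratio (x : ℝ) : Real.tanh x = (Real.exp (2*x) - 1) / (Real.exp (2*x) + 1) := by
  rw [tanh_exp_eq]
  have h := Real.exp_pos (-x)
  rw [div_eq_div_iff (by positivity) (by positivity)]
  have : Real.exp (2*x) = Real.exp x * Real.exp x := by rw [← Real.exp_add]; ring_nf
  have h2 : Real.exp x * Real.exp (-x) = 1 := by rw [← Real.exp_add]; simp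
  nlinarith [Real.exp_pos x]

lemma tanh_mono : Monotone Real.tanh := by
  intro x y hxy
  rw [tanh_ratio, tanh_ratio]
  have hx : (0:ℝ) < Real.exp (2*x) := Real.exp_pos _
  have hy : (0:ℝ) < Real.exp (2*y) := Real.exp_pos _
  have h : Real.exp (2*x) ≤ Real.exp (2*y) := Real.exp_le_exp.2 (by linarith)
  rw [div_le_div_iff₀ (by positivity) (by positivity)]
  nlinarith

lemma tanh_nonneg' {x : ℝ} (hx : 0 ≤ x) : 0 ≤ Real.tanh x := by
  simpa using tanh_mono hx

lemma abs_tanh (x : ℝ) : |Real.tanh x| = Real.tanh |x| := by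
  rcases le_or_gt 0 x with h | h
  · rw [abs_of_nonneg h, abs_of_nonneg (tanh_nonneg' h)]
  · rw [abs_of_neg h, abs_of_nonpos (by simpa using tanh_mono h.le), Real.tanh_neg]

lemma tanh_subadd {x y : ℝ} (hx : 0 ≤ x) (hy : 0 ≤ y) :
    Real.tanh (x + y) ≤ Real.tanh x + Real.tanh y := by
  rw [tanh_ratio, tanh_ratio, tanh_ratio]
  have hu : (1:ℝ) ≤ Real.exp (2*x) := by simpa using Real.exp_le_exp.2 (by linarith : (0:ℝ) ≤ 2*x)
  have hv : (1:ℝ) ≤ Real.exp (2*y) := by simpa using Real.exp_le_exp.2 (by linarith : (0:ℝ) ≤ 2*y)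
  have he : Real.exp (2*(x+y)) = Real.exp (2*x) * Real.exp (2*y) := by
    rw [← Real.exp_add]; ring_nf
  rw [he]
  set u := Real.exp (2*x)
  set v := Real.exp (2*y)
  rw [div_add_div _ _ (by positivity) (by positivity), div_le_div_iff₀ (by positivity) (by positivity)]
  nlinarith [mul_nonneg (sub_nonneg.2 hu) (sub_nonneg.2 hv), mul_pos (lt_of_lt_of_le one_pos hu) (lt_of_lt_of_le one_pos hv)]


lemma tanh_sum_le {ι : Type} (s : Finset ι) (f : ι → ℝ) (hf : ∀ i ∈ s, 0 ≤ f i) :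
    Real.tanh (∑ i ∈ s, f i) ≤ ∑ i ∈ s, Real.tanh (f i) := by
  induction s using Finset.cons_induction with
  | empty => simp
  | cons a s ha ih =>
    rw [Finset.sum_cons, Finset.sum_cons]
    have h1 : 0 ≤ f a := hf a (Finset.mem_cons_self a s)
    have h2 : ∀ i ∈ s, 0 ≤ f i := fun i hi => hf i (Finset.mem_cons_of_mem hi)
    calc Real.tanh (f a + ∑ i ∈ s, f i) ≤ Real.tanh (f a) + Real.tanh (∑ i ∈ s, f i) :=
          tanh_subadd h1 (Finset.sum_nonneg h2)
      _ ≤ _ := by linarith [ih h2]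

lemma tanh_quarter_log {a b : ℝ} (ha : 0 < a) (hb : 0 < b) :
    Real.tanh ((1/4) * Real.log (a / b)) =
      (Real.sqrt a - Real.sqrt b) / (Real.sqrt a + Real.sqrt b) := by
  have hsa : 0 < Real.sqrt a := Real.sqrt_pos.2 ha
  have hsb : 0 < Real.sqrt b := Real.sqrt_pos.2 hb
  rw [tanh_ratio]
  have he : Real.exp (2 * ((1/4) * Real.log (a / b))) = Real.sqrt a / Real.sqrt b := by
    have : 2 * ((1/4) * Real.log (a / b)) = Real.log (a/b) * (1/2 : ℝ) := by ring
    rw [this, ← Real.rpow_def_of_pos (by positivity), ← Real.sqrt_eq_rpow,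
      Real.sqrt_div ha.le]
  rw [he]
  field_simp


/-- J(G) = (1/4)·log(G(0,0)G(1,1)/(G(0,1)G(1,0))). -/
noncomputable def J2 (G : Bool → Bool → ℝ) : ℝ :=
  (1 / 4) * Real.log (G false false * G true true / (G false true * G true false))

/-- Subadditivity of tanh on nonnegative reals; additivity of `J` under pointwise
products of positive binary functions; the tanh identity for the normalised
difference of geometric means; and the resulting subadditive bound. -/
theorem tanh_J_identities :
    (∀ x y : ℝ, 0 ≤ x → 0 ≤ y → Real.tanh (x + y) ≤ Real.tanh x + Real.tanh y) ∧
    ∀ (ι : Type) (s : Finset ι) (F : ι → Bool → Bool → ℝ),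
      (∀ i ∈ s, ∀ a b, 0 < F i a b) →
      (J2 (fun a b => ∏ i ∈ s, F i a b) = ∑ i ∈ s, J2 (F i)) ∧
      (|Real.sqrt ((∏ i ∈ s, F i false false) * ∏ i ∈ s, F i true true) -
          Real.sqrt ((∏ i ∈ s, F i false true) * ∏ i ∈ s, F i true false)| /
        (Real.sqrt ((∏ i ∈ s, F i false false) * ∏ i ∈ s, F i true true) +
          Real.sqrt ((∏ i ∈ s, F i false true) * ∏ i ∈ s, F i true false)) =
        Real.tanh |J2 (fun a b => ∏ i ∈ s, F i a b)|) ∧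
      Real.tanh |J2 (fun a b => ∏ i ∈ s, F i a b)| ≤ ∑ i ∈ s, Real.tanh |J2 (F i)| := by
  refine ⟨fun x y hx hy => tanh_subadd hx hy, fun ι s F hF => ?_⟩
  have hA : 0 < (∏ i ∈ s, F i false false) * ∏ i ∈ s, F i true true := by
    apply mul_pos <;> exact Finset.prod_pos (fun i hi => hF i hi _ _)
  have hB : 0 < (∏ i ∈ s, F i false true) * ∏ i ∈ s, F i true false := by
    apply mul_pos <;> exact Finset.prod_pos (fun i hi => hF i hi _ _)
  have hJadd : J2 (fun a b => ∏ i ∈ s, F i a b) = ∑ i ∈ s, J2 (F i) := by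
    unfold J2
    simp only
    rw [← Finset.mul_sum]
    congr 1
    rw [← Finset.prod_mul_distrib, ← Finset.prod_mul_distrib, ← Finset.prod_div_distrib,
      Real.log_prod (fun i hi => ne_of_gt (div_pos (mul_pos (hF i hi _ _) (hF i hi _ _)) (mul_pos (hF i hi _ _) (hF i hi _ _))))]
  refine ⟨hJadd, ?_, ?_⟩
  · have key := tanh_quarter_log hA hB
    have : J2 (fun a b => ∏ i ∈ s, F i a b) =
        (1/4) * Real.log (((∏ i ∈ s, F i false false) * ∏ i ∈ s, F i true true) /
          ((∏ i ∈ s, F i false true) * ∏ i ∈ s, F i true false)) := rfl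
    rw [this, ← abs_tanh, key, abs_div,
      abs_of_pos (by positivity : (0:ℝ) < Real.sqrt _ + Real.sqrt _)]
  · rw [hJadd]
    calc Real.tanh |∑ i ∈ s, J2 (F i)| ≤ Real.tanh (∑ i ∈ s, |J2 (F i)|) :=
          tanh_mono (Finset.abs_sum_le_sum_abs _ _)
      _ ≤ _ := tanh_sum_le s _ (fun i _ => abs_nonneg _)
end

section
/- Let W₀₀, W₀₁, W₁₀, W₁₁ be strictly positive reals. Then |W₀₁/(W₀₀+W₀₁) − W₁₁/(W₁₀+W₁₁)| ≤ |√(W₀₀W₁₁) − √(W₀₁W₁₀)| / (√(W₀₀W₁₁) + √(W₀₁W₁₀)). -/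
/-- The path-coupling influence bound: for positive weights,
|W₀₁/(W₀₀+W₀₁) − W₁₁/(W₁₀+W₁₁)| ≤ |√(W₀₀W₁₁) − √(W₀₁W₁₀)| / (√(W₀₀W₁₁) + √(W₀₁W₁₀)). -/
theorem influence_bound (W00 W01 W10 W11 : ℝ)
    (h00 : 0 < W00) (h01 : 0 < W01) (h10 : 0 < W10) (h11 : 0 < W11) :
    |W01 / (W00 + W01) - W11 / (W10 + W11)| ≤
      |Real.sqrt (W00 * W11) - Real.sqrt (W01 * W10)| /
        (Real.sqrt (W00 * W11) + Real.sqrt (W01 * W10)) := by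
  set a := Real.sqrt (W00 * W11) with ha
  set b := Real.sqrt (W01 * W10) with hb
  have hapos : 0 < a := Real.sqrt_pos.2 (by positivity)
  have hbpos : 0 < b := Real.sqrt_pos.2 (by positivity)
  have ha2 : a ^ 2 = W00 * W11 := Real.sq_sqrt (by positivity)
  have hb2 : b ^ 2 = W01 * W10 := Real.sq_sqrt (by positivity)
  have hD : 0 < (W00 + W01) * (W10 + W11) := by positivity
  have hab : 0 < a + b := by linarith
  -- AM-GM : 2ab ≤ W00*W10 + W01*W11
  have hamgm : 2 * (a * b) ≤ W00 * W10 + W01 * W11 := by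
    have h1 : a * b = Real.sqrt ((W00 * W10) * (W01 * W11)) := by
      rw [ha, hb, ← Real.sqrt_mul (by positivity)]
      ring_nf
    have h2 : Real.sqrt ((W00 * W10) * (W01 * W11)) ≤ (W00 * W10 + W01 * W11) / 2 := by
      have := Real.sqrt_le_sqrt (show (W00 * W10) * (W01 * W11) ≤ ((W00 * W10 + W01 * W11) / 2) ^ 2 by
        nlinarith [sq_nonneg (W00 * W10 - W01 * W11)])
      rwa [Real.sqrt_sq (by positivity)] at this
    linarith [h1 ▸ h2]
  have hDge : (a + b) ^ 2 ≤ (W00 + W01) * (W10 + W11) := by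
    nlinarith
  -- rewrite LHS
  have hlhs : |W01 / (W00 + W01) - W11 / (W10 + W11)|
      = |b ^ 2 - a ^ 2| / ((W00 + W01) * (W10 + W11)) := by
    rw [div_sub_div _ _ (by positivity) (by positivity), abs_div,
      abs_of_pos hD, ha2, hb2]
    ring_nf
  rw [hlhs]
  have hnum : |b ^ 2 - a ^ 2| = |a - b| * (a + b) := by
    rw [show b ^ 2 - a ^ 2 = -((a - b) * (a + b)) by ring, abs_neg, abs_mul,
      abs_of_pos hab]
  calc |b ^ 2 - a ^ 2| / ((W00 + W01) * (W10 + W11))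
      ≤ |b ^ 2 - a ^ 2| / (a + b) ^ 2 :=
        div_le_div_of_nonneg_left (abs_nonneg _) (by positivity) hDge
    _ = |a - b| / (a + b) := by
        rw [hnum, sq]
        field_simp
end

section
/- Let F: {0,1}^V → ℝ≥0 be a signature that is not terraced, witnessed by a partial configuration p and i,j ∈ dom(p) with p_i = p_j, F_p identically zero, and F_{p^{i}}, F_{p^{j}} linearly independent. Then: (a) supp(F) is not closed under meets and joins (is not in IM-conj), and (b) the flip F^{{i}} is not IM-terraced. -/
variable {V : Type} [Fintype V] [DecidableEq V]

lemma flipOne_apply (p : V → Bool) (i v : V) :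
    flipOne p i v = if v = i then !p i else p v := by
  simp [flipOne, Function.update]

lemma patch_update (r x : V → Bool) (D : Finset V) (i : V) (hi : i ∈ D) :
    Function.update (patch r x D) i (!(patch r x D i)) = patch (flipOne r i) x D := by
  funext v
  by_cases h : v = i
  · subst h; simp [Function.update, patch, flipOne, hi]
  · simp [Function.update, h, patch, flipOne_apply, h]

lemma flipOne_comm (p : V → Bool) (i j : V) (hij : i ≠ j) :
    flipOne (flipOne (flipOne p i) j) i = flipOne p j := by
  funext v
  by_cases h : v = i
  · subst h; simp [flipOne_apply, hij, Ne.symm hij]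
  · by_cases h' : v = j <;> simp [flipOne_apply, h, h', hij, Ne.symm hij]

/-- If non-terracedness of `F` is witnessed by a partial configuration `p` and
coordinates `i,j ∈ dom(p)` with `p i = p j`, then (a) the support of `F` is not closed
under meets and joins, and (b) the flip of `F` at `i` is not IM-terraced. -/
theorem non_terraced_equal_pins (F : (V → Bool) → ℝ) (h0 : ∀ x, 0 ≤ F x)
    (D : Finset V) (p : V → Bool) (i j : V) (hi : i ∈ D) (hj : j ∈ D)
    (hpij : p i = p j)
    (hzero : ∀ x, F (patch p x D) = 0)
    (hindep : ¬ LinDep (fun x => F (patch (flipOne p i) x D))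
                       (fun x => F (patch (flipOne p j) x D))) :
    ¬ ((∀ x ∈ {y | F y ≠ 0}, ∀ y ∈ {y | F y ≠ 0}, (fun v => x v && y v) ∈ {y | F y ≠ 0}) ∧
       (∀ x ∈ {y | F y ≠ 0}, ∀ y ∈ {y | F y ≠ 0}, (fun v => x v || y v) ∈ {y | F y ≠ 0})) ∧
    ¬ IMTerraced (fun x => F (Function.update x i (!x i))) := by
  have hij : i ≠ j := by
    intro h; subst h
    exact hindep ⟨1, 1, Or.inl one_ne_zero, fun x => rfl⟩
  obtain ⟨x₀, hx₀⟩ : ∃ x, F (patch (flipOne p i) x D) ≠ 0 := by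
    by_contra h
    push_neg at h
    exact hindep ⟨1, 0, Or.inl one_ne_zero, fun x => by simp [h x]⟩
  obtain ⟨y₀, hy₀⟩ : ∃ y, F (patch (flipOne p j) y D) ≠ 0 := by
    by_contra h
    push_neg at h
    exact hindep ⟨0, 1, Or.inr one_ne_zero, fun x => by simp [h x]⟩
  constructor
  · rintro ⟨hmeet, hjoin⟩
    set a := patch (flipOne p i) x₀ D with ha
    set b := patch (flipOne p j) y₀ D with hb
    cases hpi : p i
    · have key : (fun v => a v && b v) = patch p (fun v => x₀ v && y₀ v) D := by
        funext v
        by_cases hv : v ∈ D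
        · by_cases h1 : v = i
          · subst h1; simp [ha, hb, patch, hv, flipOne_apply, hij, hpi, hpij ▸ hpi]
          · by_cases h2 : v = j
            · subst h2; simp [ha, hb, patch, hv, flipOne_apply, Ne.symm hij, hpij ▸ hpi]
            · simp [ha, hb, patch, hv, flipOne_apply, h1, h2]
        · simp [ha, hb, patch, hv]
      have := hmeet a hx₀ b hy₀
      rw [key] at this
      exact this (hzero _)
    · have key : (fun v => a v || b v) = patch p (fun v => x₀ v || y₀ v) D := by
        funext v
        by_cases hv : v ∈ D
        · by_cases h1 : v = i
          · subst h1; simp [ha, hb, patch, hv, flipOne_apply, hij, hpi, hpij ▸ hpi]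
          · by_cases h2 : v = j
            · subst h2; simp [ha, hb, patch, hv, flipOne_apply, Ne.symm hij, hpij ▸ hpi]
            · simp [ha, hb, patch, hv, flipOne_apply, h1, h2]
        · simp [ha, hb, patch, hv]
      have := hjoin a hx₀ b hy₀
      rw [key] at this
      exact this (hzero _)
  · intro hIMT
    set q := flipOne p i with hq
    have hne : q i ≠ q j := by
      have h1 : q i = !p i := by simp [hq, flipOne_apply]
      have h2 : q j = p j := by simp [hq, flipOne_apply, Ne.symm hij]
      rw [h1, h2, ← hpij]
      exact Bool.not_ne_self (p i)
    have hz : ∀ x, F (Function.update (patch q x D) i (!(patch q x D i))) = 0 := by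
      intro x
      rw [patch_update q x D i hi, hq, flipOne_flipOne]
      exact hzero x
    have := hIMT D q i j hi hj hne hz
    apply hindep
    have e1 : (fun x => F (Function.update (patch (flipOne q i) x D) i
        (!(patch (flipOne q i) x D i)))) = fun x => F (patch (flipOne p i) x D) := by
      funext x
      rw [patch_update _ x D i hi, hq, flipOne_flipOne, ← hq]
    have e2 : (fun x => F (Function.update (patch (flipOne q j) x D) i
        (!(patch (flipOne q j) x D i)))) = fun x => F (patch (flipOne p j) x D) := by
      funext x
      rw [patch_update _ x D i hi, hq, flipOne_comm p i j hij]
    rw [e1, e2] at this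
    exact this
end
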